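/- arXiv:1701.03341 — 8 statements merged into one kernel-verified Lean document; each statement's English description precedes it below -/
import Mathlib

section
/- Let Ω be a nonempty finite set and S, X : Ω → ℝ. Assume that for every ω ∈ Ω there exists ℓ ∈ ℝ such that ℓ·S(ω) − X(ω) = max_{ω' ∈ Ω}(ℓ·S(ω') − X(ω')). Then there exists a convex function Ψ : ℝ → ℝ such that X(ω) = Ψ(S(ω)) for every ω ∈ Ω; moreover, setting A(ℓ) := max_{ω' ∈ Ω}(ℓ·S(ω') − X(ω')), for every ω ∈ Ω one has X(ω) = sup_{ℓ ∈ ℝ}(S(ω)·ℓ − A(ℓ)). -/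
open Finset

/-- If every `ω` solves the maximization problem
`max_{ω'} (ℓ·S(ω') − X(ω'))` for some `ℓ`, then `X = Ψ ∘ S` for a convex function `Ψ`,
and in fact `X(ω) = sup_ℓ (S(ω)·ℓ − A(ℓ))` where `A(ℓ) = max_{ω'} (ℓ·S(ω') − X(ω'))`. -/
theorem stmt2 {Ω : Type*} [Fintype Ω] [Nonempty Ω] (S X : Ω → ℝ)
    (h : ∀ ω : Ω, ∃ ℓ : ℝ, ∀ ω' : Ω, ℓ * S ω' - X ω' ≤ ℓ * S ω - X ω) :
    ∃ Ψ : ℝ → ℝ, ConvexOn ℝ Set.univ Ψ ∧ (∀ ω, X ω = Ψ (S ω)) ∧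
      ∀ ω : Ω, X ω = ⨆ ℓ : ℝ, (S ω * ℓ - ⨆ ω' : Ω, (ℓ * S ω' - X ω')) := by
  choose L hL using h
  set f : Ω → ℝ → ℝ := fun ω' s => L ω' * (s - S ω') + X ω' with hf
  set Ψ : ℝ → ℝ := fun s => ⨆ ω' : Ω, f ω' s with hΨ
  have hbdd : ∀ s : ℝ, BddAbove (Set.range fun ω' => f ω' s) := fun s =>
    Set.Finite.bddAbove (Set.finite_range _)
  have hΨS : ∀ ω, X ω = Ψ (S ω) := by
    intro ω
    apply le_antisymm
    · have := le_ciSup (hbdd (S ω)) ω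
      simpa [hf] using this
    · apply ciSup_le
      intro ω'
      have := hL ω' ω
      simp only [hf]
      nlinarith [hL ω' ω]
  refine ⟨Ψ, ⟨convex_univ, ?_⟩, hΨS, ?_⟩
  · intro x _ y _ a b ha hb hab
    apply ciSup_le
    intro ω'
    have h1 : f ω' (a • x + b • y) = a * f ω' x + b * f ω' y := by
      simp only [hf, smul_eq_mul]; linear_combination (L ω' * S ω' - X ω') * hab
    rw [h1]
    have h2 : f ω' x ≤ Ψ x := le_ciSup (hbdd x) ω'
    have h3 : f ω' y ≤ Ψ y := le_ciSup (hbdd y) ω'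
    have : a • Ψ x + b • Ψ y = a * Ψ x + b * Ψ y := by simp [smul_eq_mul]
    rw [this]
    nlinarith
  · intro ω
    have hAle : ∀ ℓ : ℝ, S ω * ℓ - (⨆ ω' : Ω, (ℓ * S ω' - X ω')) ≤ X ω := by
      intro ℓ
      have : ℓ * S ω - X ω ≤ ⨆ ω' : Ω, (ℓ * S ω' - X ω') :=
        le_ciSup (Set.Finite.bddAbove (Set.finite_range fun ω' => ℓ * S ω' - X ω')) ω
      linarith
    apply le_antisymm
    · have hA : (⨆ ω' : Ω, (L ω * S ω' - X ω')) ≤ L ω * S ω - X ω :=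
        ciSup_le (hL ω)
      have : X ω ≤ S ω * L ω - ⨆ ω' : Ω, (L ω * S ω' - X ω') := by linarith
      exact this.trans (le_ciSup ⟨X ω, by rintro _ ⟨ℓ, rfl⟩; exact hAle ℓ⟩ (L ω))
    · exact ciSup_le hAle
end

section
/- Let Ω be a nonempty finite set, S : Ω → ℝ, and let Π be a Borel probability measure on Ω × ℝ such that ∫ |ℓ| dΠ(ω,ℓ) < ∞. Let H : ℝ → ℝ be convex and differentiable with ε ≤ H'(x) ≤ K for all x ∈ ℝ, for some constants 0 < ε < K. For X : Ω → ℝ define J(X) := ∫ H(ℓ·S(ω) − X(ω)) dΠ(ω,ℓ). Then a function X* : Ω → ℝ with ∑_{ω ∈ Ω} X*(ω) = 0 minimizes J over the set {X : Ω → ℝ : ∑_{ω ∈ Ω} X(ω) = 0} if and only if there exists a constant c ∈ ℝ such that for every ω ∈ Ω, ∫_{{ω}×ℝ} H'(ℓ·S(ω) − X*(ω)) dΠ(ω,ℓ) = c. -/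
open MeasureTheory Finset Topology Filter

private lemma stmt4_slope_combo (f : ℝ → ℝ) (a t : ℝ) (ht : t ≠ 0) :
    slope f (a + t) (a + 2*t) = 2 * slope f a (a + 2*t) - slope f a (a + t) := by
  rw [slope_def_field, slope_def_field, slope_def_field,
    show a + 2*t - (a + t) = t by ring, show a + 2*t - a = 2*t by ring,
    show a + t - a = t by ring]
  field_simp
  ring

private lemma stmt4_gradIneq {H : ℝ → ℝ} (hconv : ConvexOn ℝ Set.univ H)
    (hdiff : Differentiable ℝ H) (x y : ℝ) : H x + deriv H x * (y - x) ≤ H y := by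
  rcases lt_trichotomy x y with h | rfl | h
  · have h1 : deriv H x ≤ slope H x y := hconv.deriv_le_slope trivial trivial h (hdiff x)
    rw [slope_def_field] at h1
    have h2 : 0 < y - x := sub_pos.2 h
    have h3 := (le_div_iff₀ h2).mp h1
    linarith
  · simp
  · have h1 : slope H y x ≤ deriv H x := hconv.slope_le_deriv trivial trivial h (hdiff x)
    rw [slope_def_field] at h1
    have h2 : 0 < x - y := sub_pos.2 h
    have h3 := (div_le_iff₀ h2).mp h1
    have e : deriv H x * (y - x) = -(deriv H x * (x - y)) := by ring
    linarith

private lemma stmt4_derivCont {H : ℝ → ℝ} (hconv : ConvexOn ℝ Set.univ H)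
    (hdiff : Differentiable ℝ H) : Continuous (deriv H) := by
  have hmono : Monotone (deriv H) := fun x y hxy =>
    hconv.monotoneOn_deriv (fun z _ => hdiff z) trivial trivial hxy
  rw [continuous_iff_continuousAt]
  intro a
  rw [Metric.continuousAt_iff]
  intro e he
  have hs : Filter.Tendsto (slope H a) (𝓝[≠] a) (𝓝 (deriv H a)) :=
    hasDerivAt_iff_tendsto_slope.mp (hdiff a).hasDerivAt
  rw [Metric.tendsto_nhdsWithin_nhds] at hs
  obtain ⟨δ, hδ, hδ'⟩ := hs (e/3) (by linarith)
  refine ⟨δ/3, by linarith, ?_⟩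
  intro x hx
  set t := δ/3 with htdef
  have ht : 0 < t := by positivity
  have ht0 : t ≠ 0 := ne_of_gt ht
  have hsl : ∀ u : ℝ, u ≠ 0 → |u| < δ → |slope H a (a + u) - deriv H a| < e/3 := by
    intro u hu hud
    have hmem : a + u ∈ ({a}ᶜ : Set ℝ) := by simp [hu]
    have hd : dist (a + u) a < δ := by
      rw [Real.dist_eq]; simpa using hud
    have := hδ' hmem hd
    simpa [Real.dist_eq] using this
  have h1 := hsl t ht0 (by rw [abs_of_pos ht]; linarith)
  have h2 := hsl (2*t) (by positivity) (by rw [abs_of_pos (by linarith)]; linarith)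
  have h3 := hsl (-t) (neg_ne_zero.2 ht0) (by rw [abs_neg, abs_of_pos ht]; linarith)
  have h4 := hsl (2*(-t)) (by simp [ht0])
    (by rw [abs_mul, abs_neg, abs_of_pos ht, abs_of_pos]; linarith; norm_num)
  rw [Real.dist_eq] at hx
  rw [abs_lt] at hx
  have hub : deriv H x ≤ 2 * slope H a (a + 2*t) - slope H a (a + t) := by
    have m1 : deriv H x ≤ deriv H (a + t) := hmono (by linarith [hx.2])
    have m2 : deriv H (a + t) ≤ slope H (a+t) (a+2*t) :=
      hconv.deriv_le_slope trivial trivial (by linarith) (hdiff _)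
    rw [stmt4_slope_combo H a t ht0] at m2
    linarith
  have e1 : a + 2*(-t) = a - 2*t := by ring
  have e2 : a + (-t) = a - t := by ring
  have hcombo := stmt4_slope_combo H a (-t) (neg_ne_zero.2 ht0)
  rw [e1, e2] at hcombo
  rw [slope_comm] at hcombo
  have hlb : 2 * slope H a (a - 2*t) - slope H a (a - t) ≤ deriv H x := by
    have m1 : deriv H (a - t) ≤ deriv H x := hmono (by linarith [hx.1])
    have m2 : slope H (a - 2*t) (a - t) ≤ deriv H (a - t) :=
      hconv.slope_le_deriv trivial trivial (by linarith) (hdiff _)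
    rw [hcombo] at m2
    linarith
  rw [e2] at h3
  rw [e1] at h4
  rw [Real.dist_eq, abs_sub_lt_iff]
  rw [abs_sub_lt_iff] at h1 h2 h3 h4
  constructor
  · linarith [h1.1, h1.2, h2.1, h2.2]
  · linarith [h3.1, h3.2, h4.1, h4.2]

/-- Auxiliary: the slice integral of `deriv H (ℓ S(ω) − X*(ω) − s)` over `{ω} × ℝ`. -/
private noncomputable def stmt4F {Ω : Type*} [MeasurableSpace Ω] (S Xs : Ω → ℝ) (H : ℝ → ℝ)
    (P : Measure (Ω × ℝ)) (ω : Ω) (s : ℝ) : ℝ :=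
  ∫ p in ({ω} : Set Ω) ×ˢ (Set.univ : Set ℝ), deriv H (p.2 * S p.1 - Xs p.1 - s) ∂P

private lemma stmt4F_def {Ω : Type*} [MeasurableSpace Ω] (S Xs : Ω → ℝ) (H : ℝ → ℝ)
    (P : Measure (Ω × ℝ)) (ω : Ω) (s : ℝ) :
    stmt4F S Xs H P ω s
      = ∫ p in ({ω} : Set Ω) ×ˢ (Set.univ : Set ℝ), deriv H (p.2 * S p.1 - Xs p.1 - s) ∂P := rfl

private lemma stmt4F_fun {Ω : Type*} [MeasurableSpace Ω] (S Xs : Ω → ℝ) (H : ℝ → ℝ)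
    (P : Measure (Ω × ℝ)) (ω : Ω) :
    stmt4F S Xs H P ω
      = fun s => ∫ p in ({ω} : Set Ω) ×ˢ (Set.univ : Set ℝ),
          deriv H (p.2 * S p.1 - Xs p.1 - s) ∂P := rfl

/-- First-order characterization of the minimizer of
`J(X) = ∫ H(ℓ·S(ω) − X(ω)) dΠ(ω,ℓ)` over zero-sum `X : Ω → ℝ`: `X*` is a minimizer iff
the slice integrals `∫_{{ω}×ℝ} H'(ℓ·S(ω) − X*(ω)) dΠ` are constant in `ω`. -/
theorem stmt4 {Ω : Type*} [Fintype Ω] [Nonempty Ω]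
    [MeasurableSpace Ω] [MeasurableSingletonClass Ω]
    (S : Ω → ℝ) (P : Measure (Ω × ℝ)) [IsProbabilityMeasure P]
    (hint : Integrable (fun p : Ω × ℝ => |p.2|) P)
    (H : ℝ → ℝ) (hconv : ConvexOn ℝ Set.univ H) (hdiff : Differentiable ℝ H)
    (ε K : ℝ) (hε : 0 < ε) (hεK : ε < K)
    (hH' : ∀ x : ℝ, ε ≤ deriv H x ∧ deriv H x ≤ K)
    (J : (Ω → ℝ) → ℝ)
    (hJ : ∀ X : Ω → ℝ, J X = ∫ p : Ω × ℝ, H (p.2 * S p.1 - X p.1) ∂P)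
    (Xs : Ω → ℝ) (hXs : ∑ ω : Ω, Xs ω = 0) :
    (∀ X : Ω → ℝ, ∑ ω : Ω, X ω = 0 → J Xs ≤ J X) ↔
      ∃ c : ℝ, ∀ ω : Ω,
        (∫ p in ({ω} : Set Ω) ×ˢ (Set.univ : Set ℝ),
          deriv H (p.2 * S p.1 - Xs p.1) ∂P) = c := by
  classical
  have hK0 : (0:ℝ) < K := hε.trans hεK
  have hcont : Continuous (deriv H) := stmt4_derivCont hconv hdiff
  have habsd : ∀ x : ℝ, |deriv H x| ≤ K := fun x =>
    abs_le.2 ⟨by linarith [(hH' x).1], (hH' x).2⟩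
  have hgrad := stmt4_gradIneq hconv hdiff
  -- Lipschitz bound
  have hlip : ∀ x y : ℝ, |H x - H y| ≤ K * |x - y| := by
    intro x y
    have h1 := hgrad x y
    have h2 := hgrad y x
    have b1 : |deriv H x * (x - y)| ≤ K * |x - y| := by
      rw [abs_mul]; exact mul_le_mul_of_nonneg_right (habsd x) (abs_nonneg _)
    have b2 : |deriv H y * (x - y)| ≤ K * |x - y| := by
      rw [abs_mul]; exact mul_le_mul_of_nonneg_right (habsd y) (abs_nonneg _)
    have e1 : deriv H x * (y - x) = -(deriv H x * (x - y)) := by ring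
    rw [abs_le]
    constructor
    · linarith [neg_abs_le (deriv H y * (x - y))]
    · linarith [le_abs_self (deriv H x * (x - y))]
  -- measurability
  have hmb : ∀ X : Ω → ℝ, Measurable (fun p : Ω × ℝ => p.2 * S p.1 - X p.1) := fun X =>
    (measurable_snd.mul ((measurable_of_countable S).comp measurable_fst)).sub
      ((measurable_of_countable X).comp measurable_fst)
  -- integrability of H-compositions
  have hintH : ∀ X : Ω → ℝ, Integrable (fun p : Ω × ℝ => H (p.2 * S p.1 - X p.1)) P := by
    intro X
    have hgint : Integrable
        (fun p : Ω × ℝ => (|H 0| + K * ∑ ω, |X ω|) + (K * ∑ ω, |S ω|) * |p.2|) P :=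
      (integrable_const _).add (hint.const_mul _)
    refine hgint.mono' ((hdiff.continuous.measurable.comp (hmb X)).aestronglyMeasurable) ?_
    refine ae_of_all _ fun p => ?_
    have h1 : |H (p.2 * S p.1 - X p.1) - H 0| ≤ K * |p.2 * S p.1 - X p.1 - 0| := hlip _ _
    have hS : |S p.1| ≤ ∑ ω, |S ω| :=
      Finset.single_le_sum (fun i _ => abs_nonneg (S i)) (Finset.mem_univ _)
    have hX : |X p.1| ≤ ∑ ω, |X ω| :=
      Finset.single_le_sum (fun i _ => abs_nonneg (X i)) (Finset.mem_univ _)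
    have h2 : |p.2 * S p.1 - X p.1 - 0| ≤ |p.2| * (∑ ω, |S ω|) + ∑ ω, |X ω| := by
      rw [sub_zero]
      calc |p.2 * S p.1 - X p.1| ≤ |p.2 * S p.1| + |X p.1| := abs_sub _ _
        _ = |p.2| * |S p.1| + |X p.1| := by rw [abs_mul]
        _ ≤ |p.2| * (∑ ω, |S ω|) + ∑ ω, |X ω| := by
            have := mul_le_mul_of_nonneg_left hS (abs_nonneg p.2)
            linarith
    have h4 : K * |p.2 * S p.1 - X p.1 - 0| ≤ K * (|p.2| * (∑ ω, |S ω|) + ∑ ω, |X ω|) :=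
      mul_le_mul_of_nonneg_left h2 hK0.le
    have h5 := abs_sub_abs_le_abs_sub (H (p.2 * S p.1 - X p.1)) (H 0)
    rw [Real.norm_eq_abs]
    nlinarith [abs_nonneg (H 0)]
  -- bounded measurable functions are integrable
  have hbdd : ∀ (f : Ω × ℝ → ℝ) (C : ℝ), Measurable f → (∀ p, |f p| ≤ C) →
      Integrable f P := fun f C hm hb =>
    (integrable_const C).mono' hm.aestronglyMeasurable
      (ae_of_all _ fun p => by rw [Real.norm_eq_abs]; exact hb p)
  -- slicing the integral
  have hmeasS : ∀ ω : Ω, MeasurableSet (({ω} : Set Ω) ×ˢ (Set.univ : Set ℝ)) := fun ω =>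
    (measurableSet_singleton ω).prod MeasurableSet.univ
  have hsplit : ∀ f : Ω × ℝ → ℝ, Integrable f P →
      ∫ p, f p ∂P = ∑ ω : Ω, ∫ p in ({ω} : Set Ω) ×ˢ (Set.univ : Set ℝ), f p ∂P := by
    intro f hf
    have hunion : (⋃ ω ∈ (Finset.univ : Finset Ω),
        ({ω} : Set Ω) ×ˢ (Set.univ : Set ℝ)) = Set.univ := by
      ext p; simp
    have hdisj : Set.Pairwise ↑(Finset.univ : Finset Ω)
        (Function.onFun Disjoint fun ω : Ω => ({ω} : Set Ω) ×ˢ (Set.univ : Set ℝ)) := by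
      intro a _ b _ hab
      refine Set.disjoint_left.mpr ?_
      rintro p ⟨hp1, -⟩ ⟨hq1, -⟩
      exact hab ((Set.mem_singleton_iff.mp hp1).symm.trans (Set.mem_singleton_iff.mp hq1))
    calc ∫ p, f p ∂P = ∫ p in Set.univ, f p ∂P := (setIntegral_univ).symm
      _ = ∫ p in ⋃ ω ∈ (Finset.univ : Finset Ω), ({ω} : Set Ω) ×ˢ (Set.univ : Set ℝ),
            f p ∂P := by rw [hunion]
      _ = ∑ ω : Ω, ∫ p in ({ω} : Set Ω) ×ˢ (Set.univ : Set ℝ), f p ∂P :=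
          integral_biUnion_finset _ (fun ω _ => hmeasS ω) hdisj (fun ω _ => hf.integrableOn)
  -- congruence on slices
  have hslice : ∀ (ω : Ω) (f g : Ω × ℝ → ℝ), (∀ p : Ω × ℝ, p.1 = ω → f p = g p) →
      ∫ p in ({ω} : Set Ω) ×ˢ (Set.univ : Set ℝ), f p ∂P
        = ∫ p in ({ω} : Set Ω) ×ˢ (Set.univ : Set ℝ), g p ∂P := by
    intro ω f g hfg
    apply setIntegral_congr_fun (hmeasS ω)
    rintro p ⟨hp1, -⟩
    exact hfg p (Set.mem_singleton_iff.mp hp1)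
  -- continuity of the slice integrals in the shift
  have hFcont : ∀ ω : Ω, ContinuousAt (stmt4F S Xs H P ω) 0 := by
    intro ω
    rw [stmt4F_fun]
    apply continuousAt_of_dominated (bound := fun _ => K)
    · exact Filter.Eventually.of_forall fun s =>
        ((hcont.measurable.comp ((hmb Xs).sub measurable_const)).aestronglyMeasurable)
    · exact Filter.Eventually.of_forall fun s => ae_of_all _ fun p => by
        rw [Real.norm_eq_abs]; exact habsd _
    · exact integrable_const K
    · exact ae_of_all _ fun p =>
        (hcont.comp (continuous_const.sub continuous_id)).continuousAt
  constructor
  · -- minimizer ⇒ slice integrals constant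
    intro hmin
    have claim : ∀ a b : Ω, stmt4F S Xs H P a 0 ≤ stmt4F S Xs H P b 0 := by
      intro a b
      rcases eq_or_ne a b with rfl | hab
      · exact le_refl _
      have key : ∀ t : ℝ, 0 < t → stmt4F S Xs H P a t ≤ stmt4F S Xs H P b (-t) := by
        intro t ht
        set V : Ω → ℝ := fun ω => (if ω = a then (1:ℝ) else 0) - (if ω = b then 1 else 0)
          with hV
        have hVa : V a = 1 := by simp [hV, hab]
        have hVb : V b = -1 := by simp [hV, Ne.symm hab]
        have hVbd : ∀ ω, |V ω| ≤ 1 := by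
          intro ω
          simp only [hV]
          split_ifs <;> norm_num
        have hVsum : ∑ ω, V ω = 0 := by
          simp only [hV]
          rw [Finset.sum_sub_distrib]
          simp
        have hXtsum : ∑ ω, (Xs ω + t * V ω) = 0 := by
          rw [Finset.sum_add_distrib, hXs, ← Finset.mul_sum, hVsum, mul_zero, add_zero]
        have h0 := hmin (fun ω => Xs ω + t * V ω) hXtsum
        rw [hJ, hJ] at h0
        simp only [sub_add_eq_sub_sub] at h0
        have hg : Integrable
            (fun p : Ω × ℝ => t * V p.1 * deriv H (p.2 * S p.1 - Xs p.1 - t * V p.1)) P := by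
          apply hbdd _ (t * 1 * K)
          · exact (measurable_const.mul ((measurable_of_countable V).comp measurable_fst)).mul
              (hcont.measurable.comp ((hmb Xs).sub
                (measurable_const.mul ((measurable_of_countable V).comp measurable_fst))))
          · intro p
            rw [abs_mul, abs_mul, abs_of_pos ht]
            have d1 := habsd (p.2 * S p.1 - Xs p.1 - t * V p.1)
            have d2 := hVbd p.1
            have d4 := abs_nonneg (deriv H (p.2 * S p.1 - Xs p.1 - t * V p.1))
            calc t * |V p.1| * |deriv H (p.2 * S p.1 - Xs p.1 - t * V p.1)|
                = t * (|V p.1| * |deriv H (p.2 * S p.1 - Xs p.1 - t * V p.1)|) := by ring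
              _ ≤ t * (1 * K) :=
                  mul_le_mul_of_nonneg_left (mul_le_mul d2 d1 d4 zero_le_one) ht.le
              _ = t * 1 * K := by ring
        have hint2 : Integrable (fun p : Ω × ℝ => H (p.2 * S p.1 - Xs p.1 - t * V p.1)) P := by
          have := hintH (fun ω => Xs ω + t * V ω)
          simpa only [sub_add_eq_sub_sub] using this
        have hpt : ∀ p : Ω × ℝ,
            H (p.2 * S p.1 - Xs p.1 - t * V p.1)
              + t * V p.1 * deriv H (p.2 * S p.1 - Xs p.1 - t * V p.1)
              ≤ H (p.2 * S p.1 - Xs p.1) := by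
          intro p
          have hgr := hgrad (p.2 * S p.1 - Xs p.1 - t * V p.1) (p.2 * S p.1 - Xs p.1)
          have e : deriv H (p.2 * S p.1 - Xs p.1 - t * V p.1)
              * ((p.2 * S p.1 - Xs p.1) - (p.2 * S p.1 - Xs p.1 - t * V p.1))
              = t * V p.1 * deriv H (p.2 * S p.1 - Xs p.1 - t * V p.1) := by ring
          linarith
        have hmono2 := integral_mono (hint2.add hg) (hintH Xs) hpt
        simp only [Pi.add_apply] at hmono2
        rw [integral_add hint2 hg] at hmono2
        have hgle : ∫ p, t * V p.1 * deriv H (p.2 * S p.1 - Xs p.1 - t * V p.1) ∂P ≤ 0 := by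
          linarith
        rw [hsplit _ hg] at hgle
        have hev : ∀ ω : Ω, ∫ p in ({ω} : Set Ω) ×ˢ (Set.univ : Set ℝ),
            t * V p.1 * deriv H (p.2 * S p.1 - Xs p.1 - t * V p.1) ∂P
            = t * V ω * stmt4F S Xs H P ω (t * V ω) := by
          intro ω
          have heq := hslice ω
            (fun p => t * V p.1 * deriv H (p.2 * S p.1 - Xs p.1 - t * V p.1))
            (fun p => t * V ω * deriv H (p.2 * S p.1 - Xs p.1 - t * V ω))
            (fun p hp => by simp only [hp])
          rw [heq, integral_const_mul, stmt4F_def]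
        simp only [hev] at hgle
        have hsum2 : ∑ ω : Ω, t * V ω * stmt4F S Xs H P ω (t * V ω)
            = t * stmt4F S Xs H P a t + t * -1 * stmt4F S Xs H P b (-t) := by
          rw [← Finset.sum_subset (Finset.subset_univ ({a, b} : Finset Ω))]
          · rw [Finset.sum_pair hab]
            simp only [hVa, hVb, mul_one, mul_neg_one]
          · intro ω _ hω
            have h1 : ω ≠ a := fun h => hω (by simp [h])
            have h2 : ω ≠ b := fun h => hω (by simp [h])
            simp [hV, h1, h2]
        rw [hsum2] at hgle
        have : t * stmt4F S Xs H P a t ≤ t * stmt4F S Xs H P b (-t) := by linarith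
        exact le_of_mul_le_mul_left this ht
      have hta : Filter.Tendsto (fun t : ℝ => stmt4F S Xs H P a t) (𝓝[>] (0:ℝ))
          (𝓝 (stmt4F S Xs H P a 0)) :=
        (hFcont a).mono_left nhdsWithin_le_nhds
      have htb : Filter.Tendsto (fun t : ℝ => stmt4F S Xs H P b (-t)) (𝓝[>] (0:ℝ))
          (𝓝 (stmt4F S Xs H P b 0)) := by
        have h1 : Filter.Tendsto (fun t : ℝ => -t) (𝓝[>] (0:ℝ)) (𝓝 (0:ℝ)) := by
          have := (continuous_neg.tendsto (0:ℝ)).mono_left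
            (nhdsWithin_le_nhds (s := Set.Ioi (0:ℝ)))
          simpa using this
        exact (hFcont b).tendsto.comp h1
      refine le_of_tendsto_of_tendsto hta htb ?_
      filter_upwards [self_mem_nhdsWithin] with t ht
      exact key t ht
    obtain ⟨ω₀⟩ := (inferInstance : Nonempty Ω)
    refine ⟨stmt4F S Xs H P ω₀ 0, fun ω => ?_⟩
    have hanti := le_antisymm (claim ω ω₀) (claim ω₀ ω)
    rw [← hanti, stmt4F_def]
    simp only [sub_zero]
  · -- slice integrals constant ⇒ minimizer
    rintro ⟨c, hc⟩ X hXsum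
    rw [hJ, hJ]
    have hg2 : Integrable
        (fun p : Ω × ℝ => (Xs p.1 - X p.1) * deriv H (p.2 * S p.1 - Xs p.1)) P := by
      apply hbdd _ ((∑ ω, |Xs ω - X ω|) * K)
      · exact ((measurable_of_countable (fun ω => Xs ω - X ω)).comp measurable_fst).mul
          (hcont.measurable.comp (hmb Xs))
      · intro p
        rw [abs_mul]
        have h1 : |Xs p.1 - X p.1| ≤ ∑ ω, |Xs ω - X ω| :=
          Finset.single_le_sum (f := fun ω => |Xs ω - X ω|)
            (fun i _ => abs_nonneg _) (Finset.mem_univ _)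
        exact mul_le_mul h1 (habsd _) (abs_nonneg _)
          (Finset.sum_nonneg fun i _ => abs_nonneg _)
    have hpt : ∀ p : Ω × ℝ,
        H (p.2 * S p.1 - Xs p.1) + (Xs p.1 - X p.1) * deriv H (p.2 * S p.1 - Xs p.1)
          ≤ H (p.2 * S p.1 - X p.1) := by
      intro p
      have hgr := hgrad (p.2 * S p.1 - Xs p.1) (p.2 * S p.1 - X p.1)
      have e : deriv H (p.2 * S p.1 - Xs p.1)
          * ((p.2 * S p.1 - X p.1) - (p.2 * S p.1 - Xs p.1))
          = (Xs p.1 - X p.1) * deriv H (p.2 * S p.1 - Xs p.1) := by ring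
      linarith
    have hmono2 := integral_mono ((hintH Xs).add hg2) (hintH X) hpt
    simp only [Pi.add_apply] at hmono2
    rw [integral_add (hintH Xs) hg2] at hmono2
    have hzero : ∫ p, (Xs p.1 - X p.1) * deriv H (p.2 * S p.1 - Xs p.1) ∂P = 0 := by
      rw [hsplit _ hg2]
      have hev : ∀ ω : Ω, ∫ p in ({ω} : Set Ω) ×ˢ (Set.univ : Set ℝ),
          (Xs p.1 - X p.1) * deriv H (p.2 * S p.1 - Xs p.1) ∂P = (Xs ω - X ω) * c := by
        intro ω
        have heq := hslice ω
          (fun p => (Xs p.1 - X p.1) * deriv H (p.2 * S p.1 - Xs p.1))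
          (fun p => (Xs ω - X ω) * deriv H (p.2 * S p.1 - Xs p.1))
          (fun p hp => by simp only [hp])
        rw [heq, integral_const_mul, hc ω]
      simp only [hev]
      rw [← Finset.sum_mul, Finset.sum_sub_distrib, hXs, hXsum, sub_zero, zero_mul]
    linarith
end

section
/- Let Ψ : ℝ → ℝ be any function. For q ∈ {1,…,n} define p_q := √n·E_{λ_n}[u_q·Ψ(S_n) | u_1,…,u_{q−1}]. Then: (i) for every q, p_q = √n·E_{λ_n}[u_n·Ψ(S_n) | u_1,…,u_{q−1}]; (ii) the process (p_q)_{q=1,…,n} is a martingale under λ_n with respect to the filtration (σ(u_1,…,u_{q−1}))_{q=1,…,n}, i.e. E_{λ_n}[p_{q+1} | u_1,…,u_{q−1}] = p_q for every q ∈ {1,…,n−1}. -/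
open Finset

/-- The value `±1` attached to a boolean coordinate. -/
noncomputable def sgn (b : Bool) : ℝ := if b then 1 else -1

/-- Conditional expectation under the uniform measure on `{-1,+1}^n` given the first
`k` coordinates: the average of `f` over all configurations agreeing with `ω` on the
first `k` coordinates. -/
noncomputable def condExpUnif (n k : ℕ) (f : (Fin n → Bool) → ℝ) (ω : Fin n → Bool) : ℝ :=
  (∑ ω' : Fin n → Bool, if ∀ i : Fin n, (i : ℕ) < k → ω' i = ω i then f ω' else 0) /
    2 ^ (n - k)

lemma card_agree (n m : ℕ) (hm : m ≤ n) (c : Fin n → Bool) :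
    (∑ ω' : Fin n → Bool, if ∀ i : Fin n, (i : ℕ) < m → ω' i = c i then (1:ℝ) else 0)
      = 2 ^ (n - m) := by
  classical
  rw [Finset.sum_boole]
  have e1 : {ω' : Fin n → Bool // ∀ i : Fin n, (i : ℕ) < m → ω' i = c i}
      ≃ ({i : Fin n // m ≤ (i : ℕ)} → Bool) :=
    { toFun := fun ω' i => ω'.1 i.1
      invFun := fun g => ⟨fun i => if h : (i:ℕ) < m then c i else g ⟨i, by omega⟩,
        fun i hi => by simp [hi]⟩
      left_inv := by
        intro ⟨ω', hω'⟩
        ext i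
        by_cases h : (i:ℕ) < m
        · simp [h, hω' i h]
        · simp [h]
      right_inv := by
        intro g
        ext i
        have : ¬ ((i.1 : ℕ) < m) := by omega
        simp [this] }
  have e2 : {i : Fin n // m ≤ (i : ℕ)} ≃ Fin (n - m) :=
    { toFun := fun i => ⟨i.1 - m, by omega⟩
      invFun := fun j => ⟨⟨j + m, by omega⟩, by simp⟩
      left_inv := by intro ⟨i, hi⟩; ext; simp; omega
      right_inv := by intro j; ext; simp }
  have : (Finset.univ.filter fun ω' : Fin n → Bool =>
      ∀ i : Fin n, (i : ℕ) < m → ω' i = c i).card = 2 ^ (n - m) := by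
    rw [← Fintype.card_subtype]
    rw [Fintype.card_congr e1, Fintype.card_fun, Fintype.card_congr e2]
    simp
  rw [this]
  push_cast
  ring

lemma tower (n k m : ℕ) (hkm : k ≤ m) (hm : m ≤ n) (f : (Fin n → Bool) → ℝ)
    (ω : Fin n → Bool) :
    condExpUnif n k (fun ω' => condExpUnif n m f ω') ω = condExpUnif n k f ω := by
  classical
  unfold condExpUnif
  rw [div_eq_div_iff (by positivity) (by positivity)]
  have key : ∀ ω'' : Fin n → Bool,
      (∑ ω' : Fin n → Bool,
        (if ∀ i : Fin n, (i:ℕ) < k → ω' i = ω i then (1:ℝ) else 0) *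
        (if ∀ i : Fin n, (i:ℕ) < m → ω'' i = ω' i then (1:ℝ) else 0))
      = (if ∀ i : Fin n, (i:ℕ) < k → ω'' i = ω i then (1:ℝ) else 0) * 2 ^ (n - m) := by
    intro ω''
    by_cases hA : ∀ i : Fin n, (i:ℕ) < k → ω'' i = ω i
    · simp only [eq_true hA, if_true, one_mul]
      rw [← card_agree n m hm ω'']
      apply Finset.sum_congr rfl
      intro ω' _
      by_cases hB : ∀ i : Fin n, (i:ℕ) < m → ω' i = ω'' i
      · have h1 : ∀ i : Fin n, (i:ℕ) < k → ω' i = ω i := fun i hi =>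
          (hB i (lt_of_lt_of_le hi hkm)).trans (hA i hi)
        have h2 : ∀ i : Fin n, (i:ℕ) < m → ω'' i = ω' i := fun i hi => (hB i hi).symm
        rw [if_pos h1, if_pos h2, if_pos hB]; ring
      · have h3 : ¬ ∀ i : Fin n, (i:ℕ) < m → ω'' i = ω' i := by
          intro h; exact hB (fun i hi => (h i hi).symm)
        rw [if_neg h3, if_neg hB]; ring
    · simp only [eq_false hA, if_false, zero_mul]
      apply Finset.sum_eq_zero
      intro ω' _
      by_cases h1 : ∀ i : Fin n, (i:ℕ) < k → ω' i = ω i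
      · by_cases h2 : ∀ i : Fin n, (i:ℕ) < m → ω'' i = ω' i
        · exfalso; exact hA (fun i hi => (h2 i (lt_of_lt_of_le hi hkm)).trans (h1 i hi))
        · simp [h2]
      · simp [h1]
  calc (∑ ω' : Fin n → Bool, if ∀ i : Fin n, (i:ℕ) < k → ω' i = ω i then
          (∑ ω'' : Fin n → Bool, if ∀ i : Fin n, (i:ℕ) < m → ω'' i = ω' i then f ω'' else 0) /
            2 ^ (n - m) else 0) * 2 ^ (n - k)
      = (∑ ω'' : Fin n → Bool, ∑ ω' : Fin n → Bool,
          (if ∀ i : Fin n, (i:ℕ) < k → ω' i = ω i then (1:ℝ) else 0) *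
          (if ∀ i : Fin n, (i:ℕ) < m → ω'' i = ω' i then (1:ℝ) else 0) * f ω'' / 2 ^ (n-m))
          * 2 ^ (n - k) := by
        rw [Finset.sum_comm]
        congr 1
        apply Finset.sum_congr rfl
        intro ω' _
        by_cases h1 : ∀ i : Fin n, (i:ℕ) < k → ω' i = ω i
        · simp only [eq_true h1, if_true, one_mul]
          rw [Finset.sum_div]
          apply Finset.sum_congr rfl
          intro ω'' _
          by_cases h2 : ∀ i : Fin n, (i:ℕ) < m → ω'' i = ω' i
          · rw [if_pos h2, if_pos h2]; ring
          · rw [if_neg h2, if_neg h2]; ring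
        · simp only [eq_false h1, if_false, zero_mul, zero_div, Finset.sum_const_zero]
    _ = (∑ ω'' : Fin n → Bool, if ∀ i : Fin n, (i:ℕ) < k → ω'' i = ω i then f ω'' else 0)
          * 2 ^ (n - k) := by
        congr 1
        apply Finset.sum_congr rfl
        intro ω'' _
        rw [← Finset.sum_div, ← Finset.sum_mul, key]
        by_cases h : ∀ i : Fin n, (i:ℕ) < k → ω'' i = ω i
        · rw [if_pos h, if_pos h, one_mul, mul_comm, mul_div_assoc,
            div_self (by positivity : (2:ℝ) ^ (n - m) ≠ 0), mul_one]
        · rw [if_neg h, if_neg h]; ring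

lemma condExp_smul (n k : ℕ) (c : ℝ) (f : (Fin n → Bool) → ℝ) (ω : Fin n → Bool) :
    condExpUnif n k (fun ω' => c * f ω') ω = c * condExpUnif n k f ω := by
  unfold condExpUnif
  rw [← mul_div_assoc, Finset.mul_sum]
  congr 1
  apply Finset.sum_congr rfl
  intro ω' _
  by_cases h : ∀ i : Fin n, (i:ℕ) < k → ω' i = ω i
  · rw [if_pos h, if_pos h]
  · rw [if_neg h, if_neg h, mul_zero]

lemma condExp_swap (n k : ℕ) (Ψ : ℝ → ℝ) (S : (Fin n → Bool) → ℝ)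
    (hS : ∀ ω, S ω = (1 / Real.sqrt n) * ∑ i : Fin n, sgn (ω i))
    (a b : Fin n) (hak : k ≤ (a:ℕ)) (hbk : k ≤ (b:ℕ)) (ω : Fin n → Bool) :
    condExpUnif n k (fun ω' => sgn (ω' a) * Ψ (S ω')) ω
      = condExpUnif n k (fun ω' => sgn (ω' b) * Ψ (S ω')) ω := by
  classical
  unfold condExpUnif
  congr 1
  let e : (Fin n → Bool) ≃ (Fin n → Bool) :=
    (Equiv.swap a b).arrowCongr (Equiv.refl Bool)
  rw [← Equiv.sum_comp e (fun ω' =>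
    if ∀ i : Fin n, (i : ℕ) < k → ω' i = ω i then sgn (ω' a) * Ψ (S ω') else 0)]
  apply Finset.sum_congr rfl
  intro ω' _
  have he : ∀ l, e ω' l = ω' (Equiv.swap a b l) := by
    intro l
    simp [e, Equiv.arrowCongr, Equiv.swap_apply_self]
  have hcond : (∀ i : Fin n, (i : ℕ) < k → e ω' i = ω i) ↔
      (∀ i : Fin n, (i : ℕ) < k → ω' i = ω i) := by
    constructor
    · intro h i hi
      have hia : i ≠ a := by intro h'; subst h'; omega
      have hib : i ≠ b := by intro h'; subst h'; omega
      have := h i hi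
      rwa [he, Equiv.swap_apply_of_ne_of_ne hia hib] at this
    · intro h i hi
      have hia : i ≠ a := by intro h'; subst h'; omega
      have hib : i ≠ b := by intro h'; subst h'; omega
      rw [he, Equiv.swap_apply_of_ne_of_ne hia hib]
      exact h i hi
  have hSe : S (e ω') = S ω' := by
    rw [hS, hS]
    congr 1
    rw [← Equiv.sum_comp (Equiv.swap a b) (fun i => sgn (ω' i))]
    apply Finset.sum_congr rfl
    intro i _
    rw [he]
  have hea : e ω' a = ω' b := by rw [he, Equiv.swap_apply_left]
  by_cases h : ∀ i : Fin n, (i : ℕ) < k → ω' i = ω i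
  · rw [if_pos (hcond.mpr h), if_pos h, hea, hSe]
  · rw [if_neg (fun h' => h (hcond.mp h')), if_neg h]

/-- For `p_q := √n·E_{λ_n}[u_q·Ψ(S_n) | u_1,…,u_{q-1}]`:
(i) `p_q = √n·E_{λ_n}[u_n·Ψ(S_n) | u_1,…,u_{q-1}]`;
(ii) `(p_q)` is a `λ_n`-martingale for the filtration `σ(u_1,…,u_{q-1})`. -/
theorem stmt5 (n : ℕ) (hn : 1 ≤ n) (Ψ : ℝ → ℝ)
    (S : (Fin n → Bool) → ℝ)
    (hS : ∀ ω, S ω = (1 / Real.sqrt n) * ∑ i : Fin n, sgn (ω i))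
    (p : Fin n → (Fin n → Bool) → ℝ)
    (hp : ∀ (q : Fin n) ω, p q ω =
      Real.sqrt n * condExpUnif n q (fun ω' => sgn (ω' q) * Ψ (S ω')) ω) :
    (∀ (q : Fin n) (ω : Fin n → Bool),
        p q ω =
          Real.sqrt n *
            condExpUnif n q (fun ω' => sgn (ω' ⟨n - 1, by omega⟩) * Ψ (S ω')) ω) ∧
    (∀ (q : Fin n) (h : (q : ℕ) + 1 < n) (ω : Fin n → Bool),
        condExpUnif n q (fun ω' => p ⟨(q : ℕ) + 1, h⟩ ω') ω = p q ω) := by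
  have hlast : ∀ (q : Fin n), (q : ℕ) ≤ ((⟨n - 1, by omega⟩ : Fin n) : ℕ) := by
    intro q; have := q.2; simp; omega
  have part1 : ∀ (q : Fin n) (ω : Fin n → Bool),
      p q ω = Real.sqrt n *
        condExpUnif n q (fun ω' => sgn (ω' ⟨n - 1, by omega⟩) * Ψ (S ω')) ω := by
    intro q ω
    rw [hp q ω, condExp_swap n q Ψ S hS q ⟨n - 1, by omega⟩ le_rfl (hlast q) ω]
  refine ⟨part1, ?_⟩
  intro q h ω
  have step1 : (fun ω' => p ⟨(q : ℕ) + 1, h⟩ ω') =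
      (fun ω' => Real.sqrt n *
        condExpUnif n ((q : ℕ) + 1) (fun ω'' => sgn (ω'' ⟨n - 1, by omega⟩) * Ψ (S ω'')) ω') := by
    funext ω'
    exact part1 ⟨(q : ℕ) + 1, h⟩ ω'
  rw [step1, condExp_smul,
    tower n q ((q : ℕ) + 1) (by omega) (by omega)
      (fun ω'' => sgn (ω'' ⟨n - 1, by omega⟩) * Ψ (S ω'')) ω,
    part1 q ω]
end

section
/- Let Ψ : ℝ → ℝ be a convex function, h > 0 and x ∈ ℝ. If Ψ(x+h) − Ψ(x−h) = Ψ(x+3h) − Ψ(x+h), then Ψ is affine на the interval [x−h, x+3h], i.e. there exist a, b ∈ ℝ with Ψ(t) = a·t + b for all t ∈ [x−h, x+3h]. -/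
/-!
The hypothesis says that the line through `(x - h, Ψ (x - h))` and `(x + h, Ψ (x + h))` also
passes through `(x + 3h, Ψ (x + 3h))`. Subtracting it from `Ψ` leaves a convex function `g` with
the same value `c` at these three points. Convexity gives `g ≤ c` between the end points, and
since `g` attains `c` at the interior point `x + h`, it cannot drop below `c` on either side of
it; hence `g = c` on `[x - h, x + 3h]`.
-/

open Set

variable {𝕜 : Type*} [Field 𝕜] [LinearOrder 𝕜] [IsStrictOrderedRing 𝕜]

theorem ConvexOn.sub_mul_id {s : Set 𝕜} {f : 𝕜 → 𝕜} (hf : ConvexOn 𝕜 s f) (a : 𝕜) :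
    ConvexOn 𝕜 s fun t ↦ f t - a * t :=
  hf.sub ((LinearMap.mulLeft 𝕜 a).concaveOn hf.1)

theorem ConvexOn.eqOn_Icc_of_eq {f : 𝕜 → 𝕜} {p m q c : 𝕜} (hf : ConvexOn 𝕜 (Icc p q) f)
    (hm : m ∈ Ioo p q) (hp : f p = c) (hfm : f m = c) (hq : f q = c) :
    EqOn f (fun _ ↦ c) (Icc p q) := by
  have hpI : p ∈ Icc p q := left_mem_Icc.2 (hm.1.trans hm.2).le
  have hqI : q ∈ Icc p q := right_mem_Icc.2 (hm.1.trans hm.2).le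
  intro t ht
  refine le_antisymm ?_ ?_
  · simpa [hp, hq] using hf.le_max_of_mem_Icc hpI hqI ht
  · rw [← hfm]
    rcases le_total t m with htm | hmt
    · exact hf.le_left_of_right_le'' ht hqI htm hm.2 (hq.trans hfm.symm).le
    · exact hf.le_right_of_left_le'' hpI ht hm.1 hmt (hp.trans hfm.symm).le

theorem ConvexOn.eqOn_Icc_of_eq_affine {f : 𝕜 → 𝕜} {p m q a b : 𝕜}
    (hf : ConvexOn 𝕜 (Icc p q) f) (hm : m ∈ Ioo p q)
    (hp : f p = a * p + b) (hfm : f m = a * m + b) (hq : f q = a * q + b) :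
    EqOn f (fun t ↦ a * t + b) (Icc p q) := by
  intro t ht
  have hg : f t - a * t = b :=
    (hf.sub_mul_id a).eqOn_Icc_of_eq hm (by simp [hp]) (by simp [hfm]) (by simp [hq]) ht
  linarith

/-- If `Ψ` is convex, `h > 0` and
`Ψ(x+h) − Ψ(x−h) = Ψ(x+3h) − Ψ(x+h)`, then `Ψ` is affine on `[x−h, x+3h]`. -/
theorem stmt7 (Ψ : ℝ → ℝ) (hΨ : ConvexOn ℝ Set.univ Ψ) (h x : ℝ) (hh : 0 < h)
    (heq : Ψ (x + h) - Ψ (x - h) = Ψ (x + 3 * h) - Ψ (x + h)) :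
    ∃ a b : ℝ, ∀ t ∈ Set.Icc (x - h) (x + 3 * h), Ψ t = a * t + b := by
  set a := (Ψ (x + h) - Ψ (x - h)) / (2 * h)
  refine ⟨a, Ψ (x + h) - a * (x + h), fun t ht ↦ ?_⟩
  have ha : a * (2 * h) = Ψ (x + h) - Ψ (x - h) := div_mul_cancel₀ _ (by positivity)
  refine (hΨ.subset (subset_univ _) (convex_Icc _ _)).eqOn_Icc_of_eq_affine
    (m := x + h) ⟨by linarith, by linarith⟩ ?_ ?_ ?_ ht <;> linarith
end

section
/- Let (Ψ_n)_{n ∈ ℕ} be a sequence of convex functions ℝ → ℝ that converges uniformly on ℝ to a differentiable function Ψ : ℝ → ℝ. Let (x_n) and (z_n) be real sequences such that x_n → x and, for every n, z_n is a subgradient of Ψ_n at x_n, i.e. Ψ_n(y) ≥ Ψ_n(x_n) + z_n·(y − x_n) for all y ∈ ℝ. Then z_n → Ψ'(x). -/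
open Filter

/-- If convex functions `Ψ_n` converge uniformly on `ℝ` to a
differentiable `Ψ`, `x_n → x`, and `z_n` is a subgradient of `Ψ_n` at `x_n`, then
`z_n → Ψ'(x)`. -/
theorem stmt9 (Ψn : ℕ → ℝ → ℝ) (Ψ : ℝ → ℝ)
    (hconv : ∀ n, ConvexOn ℝ Set.univ (Ψn n))
    (hunif : TendstoUniformly Ψn Ψ atTop)
    (hdiff : Differentiable ℝ Ψ)
    (x : ℝ) (xs zs : ℕ → ℝ)
    (hx : Tendsto xs atTop (nhds x))
    (hz : ∀ n, ∀ y : ℝ, Ψn n (xs n) + zs n * (y - xs n) ≤ Ψn n y) :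
    Tendsto zs atTop (nhds (deriv Ψ x)) := by
  set L := deriv Ψ x with hLdef
  have hcont : Continuous Ψ := hdiff.continuous
  have key : ∀ c : ℝ, Tendsto (fun n => Ψn n (xs n + c)) atTop (nhds (Ψ (x + c))) := by
    intro c
    exact hunif.tendsto_comp hcont.continuousAt (hx.add_const c)
  have key0 : Tendsto (fun n => Ψn n (xs n)) atTop (nhds (Ψ x)) :=
    hunif.tendsto_comp hcont.continuousAt hx
  rw [Metric.tendsto_nhds]
  intro ε hε
  have hder : HasDerivAt Ψ L x := (hdiff x).hasDerivAt
  have hslope := hasDerivAt_iff_tendsto_slope.mp hder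
  have hev : ∀ᶠ y in nhdsWithin x {x}ᶜ, |slope Ψ x y - L| < ε / 2 := by
    have := hslope (Metric.ball_mem_nhds L (by linarith : (0:ℝ) < ε / 2))
    filter_upwards [this] with y hy
    simpa [Real.dist_eq] using hy
  obtain ⟨δ, hδ, hδ'⟩ := Metric.mem_nhdsWithin_iff.mp hev
  set h := δ / 2 with hh
  have hpos : 0 < h := by positivity
  have hmemA : (x + h) ∈ Metric.ball x δ ∩ {x}ᶜ := by
    constructor
    · simp [Real.dist_eq, abs_of_nonneg hpos.le]
      linarith
    · simp only [Set.mem_compl_iff, Set.mem_singleton_iff]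
      intro hcontra; nlinarith
  have hmemB : (x + -h) ∈ Metric.ball x δ ∩ {x}ᶜ := by
    constructor
    · simp only [Metric.mem_ball, Real.dist_eq]
      rw [show x + -h - x = -h by ring, abs_neg, abs_of_nonneg hpos.le]
      linarith
    · simp only [Set.mem_compl_iff, Set.mem_singleton_iff]
      intro hcontra; nlinarith
  have sA : |(Ψ (x + h) - Ψ x) / h - L| < ε / 2 := by
    have := hδ' hmemA
    simp only [Set.mem_setOf_eq, slope_def_field] at this
    rw [show x + h - x = h by ring] at this
    exact this
  have sB : |(Ψ x - Ψ (x + -h)) / h - L| < ε / 2 := by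
    have := hδ' hmemB
    have h2 : slope Ψ x (x + -h) = (Ψ x - Ψ (x + -h)) / h := by
      rw [slope_def_field, show x + -h - x = -h by ring, div_neg, ← neg_div]
      ring_nf
    rw [Set.mem_setOf_eq, h2] at this
    exact this
  have tendA : Tendsto (fun n => (Ψn n (xs n + h) - Ψn n (xs n)) / h) atTop
      (nhds ((Ψ (x + h) - Ψ x) / h)) := ((key h).sub key0).div_const h
  have tendB : Tendsto (fun n => (Ψn n (xs n) - Ψn n (xs n + -h)) / h) atTop
      (nhds ((Ψ x - Ψ (x + -h)) / h)) := (key0.sub (key (-h))).div_const h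
  have evA : ∀ᶠ n in atTop, (Ψn n (xs n + h) - Ψn n (xs n)) / h < L + ε := by
    apply tendA.eventually_lt_const
    have := abs_sub_lt_iff.mp sA
    linarith [this.1]
  have evB : ∀ᶠ n in atTop, L - ε < (Ψn n (xs n) - Ψn n (xs n + -h)) / h := by
    apply tendB.eventually_const_lt
    have := abs_sub_lt_iff.mp sB
    linarith [this.2]
  filter_upwards [evA, evB] with n hA hB
  have h1 : zs n ≤ (Ψn n (xs n + h) - Ψn n (xs n)) / h := by
    have := hz n (xs n + h)
    rw [show xs n + h - xs n = h by ring] at this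
    rw [le_div_iff₀ hpos]
    linarith
  have h2 : (Ψn n (xs n) - Ψn n (xs n + -h)) / h ≤ zs n := by
    have := hz n (xs n + -h)
    rw [show xs n + -h - xs n = -h by ring] at this
    rw [div_le_iff₀ hpos]
    nlinarith
  rw [Real.dist_eq, abs_sub_lt_iff]
  constructor <;> linarith
end

section
/- Let μ be a Borel probability measure on ℝ supported on [0,1] with a density f_μ (with respect to Lebesgue measure) satisfying f_μ(ℓ) ≥ ε for all ℓ ∈ [0,1], where ε > 0. Let ν₁, ν₂ be Borel probability measures on ℝ with finite second moments, and for i = 1,2 define Φ_{ν_i}(x) := ∫₀^x F_{ν_i}^{−1}(F_μ(ℓ)) dℓ for x ∈ [0,1]. Then sup_{x ∈ [0,1]} |Φ_{ν₁}(x) − Φ_{ν₂}(x)| ≤ (1/ε)·( ∫₀¹ (F_{ν₁}^{−1}(u) − F_{ν₂}^{−1}(u))² du )^{1/2}. -/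
open MeasureTheory

/-- The cumulative distribution function of a Borel measure on `ℝ`. -/
noncomputable def cdfFun (ν : Measure ℝ) (x : ℝ) : ℝ := (ν (Set.Iic x)).toReal

/-- The right-continuous quantile function `F_ν^{-1}(y) = inf {x : F_ν(x) > y}`. -/
noncomputable def quantFun (ν : Measure ℝ) (y : ℝ) : ℝ := sInf {x : ℝ | y < cdfFun ν x}

/-!
Since `μ` has density at least `ε` on `[0, 1]`, Lebesgue measure on `[0, 1]` is at most `ε⁻¹ • μ`,
so `|Φ_{ν₁}(x) − Φ_{ν₂}(x)| ≤ ε⁻¹ ∫ |F_{ν₁}^{-1}(F_μ) − F_{ν₂}^{-1}(F_μ)| dμ`. As `μ` has no atoms,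
`F_μ` pushes `μ` to the uniform law on `(0, 1)` (probability integral transform), which turns the
right-hand side into `ε⁻¹ ∫₀¹ |F_{ν₁}^{-1} − F_{ν₂}^{-1}|`, and Cauchy–Schwarz bounds this by the
`L²` distance. Conversely `F_ν^{-1}` pushes the uniform law to `ν` (quantile transform), so finite
second moments make the quantile functions square integrable and all these integrals genuine.
-/

open Set Filter ProbabilityTheory

section Quantile

variable {ν : Measure ℝ} [IsProbabilityMeasure ν]

lemma cdfFun_eq_cdf : cdfFun ν = cdf ν :=
  funext fun x => (cdf_eq_real ν x).symm

lemma continuous_cdfFun [NullSingletonClass ν] : Continuous (cdfFun ν) := by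
  rw [cdfFun_eq_cdf, continuous_iff_continuousAt]
  intro x
  rw [(monotone_cdf ν).continuousAt_iff_leftLim_eq_rightLim, (cdf ν).rightLim_eq]
  have hjump : (cdf ν).measure {x} = 0 := by rw [measure_cdf]; exact measure_singleton x
  rw [StieltjesFunction.measure_singleton, ENNReal.ofReal_eq_zero] at hjump
  exact le_antisymm ((monotone_cdf ν).leftLim_le le_rfl) (by linarith)

lemma bddBelow_setOf_lt_cdfFun {u : ℝ} (hu : 0 < u) : BddBelow {x | u < cdfFun ν x} := by
  obtain ⟨x₀, hx₀⟩ := eventually_atBot.mp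
    ((tendsto_cdf_atBot ν).eventually (eventually_lt_nhds hu))
  refine ⟨x₀, fun y hy => le_of_not_gt fun hyx => ?_⟩
  rw [cdfFun_eq_cdf] at hy
  exact (hx₀ y hyx.le).not_gt hy

lemma nonempty_setOf_lt_cdfFun {u : ℝ} (hu : u < 1) : {x | u < cdfFun ν x}.Nonempty := by
  rw [cdfFun_eq_cdf]
  exact ((tendsto_cdf_atTop ν).eventually (eventually_gt_nhds hu)).exists

lemma quantFun_le_of_lt_cdfFun {u x : ℝ} (hu : 0 < u) (h : u < cdfFun ν x) :
    quantFun ν u ≤ x :=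
  csInf_le (bddBelow_setOf_lt_cdfFun hu) h

lemma le_cdfFun_of_quantFun_le {u x : ℝ} (hu : u ∈ Ioo 0 1) (h : quantFun ν u ≤ x) :
    u ≤ cdfFun ν x := by
  by_contra! hx
  rw [cdfFun_eq_cdf] at hx
  obtain ⟨y, hy, hxy⟩ := ((((cdf ν).right_continuous x).mono Ioi_subset_Ici_self).eventually
    (eventually_lt_nhds hx)).and self_mem_nhdsWithin |>.exists
  obtain ⟨z, hz, hzy⟩ := (csInf_lt_iff (bddBelow_setOf_lt_cdfFun hu.1)
    (nonempty_setOf_lt_cdfFun hu.2)).mp (h.trans_lt hxy)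
  rw [cdfFun_eq_cdf] at hz
  exact (hz.trans_le (monotone_cdf ν hzy.le)).not_gt hy

lemma monotoneOn_quantFun : MonotoneOn (quantFun ν) (Ioo 0 1) := fun _ hu _ hv huv =>
  csInf_le_csInf (bddBelow_setOf_lt_cdfFun hu.1) (nonempty_setOf_lt_cdfFun hv.2)
    fun _ hx => huv.trans_lt hx

lemma aemeasurable_quantFun : AEMeasurable (quantFun ν) (volume.restrict (Ioo 0 1)) :=
  aemeasurable_restrict_of_monotoneOn measurableSet_Ioo monotoneOn_quantFun

theorem map_quantFun : (volume.restrict (Ioo 0 1)).map (quantFun ν) = ν := by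
  refine Measure.ext_of_Iic _ _ fun x => ?_
  rw [Measure.map_apply₀ aemeasurable_quantFun measurableSet_Iic.nullMeasurableSet,
    Measure.restrict_apply' measurableSet_Ioo, ← ofReal_cdf, ← cdfFun_eq_cdf]
  have hF1 : cdfFun ν x ≤ 1 := by rw [cdfFun_eq_cdf]; exact cdf_le_one ν x
  apply le_antisymm
  · calc volume (quantFun ν ⁻¹' Iic x ∩ Ioo 0 1) ≤ volume (Ioc 0 (cdfFun ν x)) :=
          measure_mono fun u hu => ⟨hu.2.1, le_cdfFun_of_quantFun_le hu.2 hu.1⟩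
      _ = _ := by rw [Real.volume_Ioc, sub_zero]
  · calc ENNReal.ofReal (cdfFun ν x) = volume (Ioo 0 (cdfFun ν x)) := by
          rw [Real.volume_Ioo, sub_zero]
      _ ≤ volume (quantFun ν ⁻¹' Iic x ∩ Ioo 0 1) := measure_mono fun u hu =>
          ⟨quantFun_le_of_lt_cdfFun hu.1 hu.2, ⟨hu.1, hu.2.trans_le hF1⟩⟩

lemma memLp_two_quantFun (h : Integrable (fun x : ℝ => x ^ 2) ν) :
    MemLp (quantFun ν) 2 (volume.restrict (Ioo 0 1)) := by
  have hid : MemLp id 2 ν := (memLp_two_iff_integrable_sq aestronglyMeasurable_id).2 h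
  rw [← map_quantFun (ν := ν)] at hid
  exact (memLp_map_measure_iff aestronglyMeasurable_id aemeasurable_quantFun).1 hid

end Quantile

section ProbabilityIntegralTransform

variable {μ : Measure ℝ} [IsProbabilityMeasure μ]

lemma measurable_cdfFun : Measurable (cdfFun μ) := by
  rw [cdfFun_eq_cdf]; exact (monotone_cdf μ).measurable

variable [NullSingletonClass μ]

lemma measure_preimage_cdfFun_Iic {z : ℝ} (hz0 : 0 ≤ z) (hz1 : z < 1) :
    μ (cdfFun μ ⁻¹' Iic z) = ENNReal.ofReal z := by
  set S := cdfFun μ ⁻¹' Iic z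
  rcases S.eq_empty_or_nonempty with hS | hS
  · have hz : z ≤ 0 := ge_of_tendsto' (tendsto_cdf_atBot μ) fun t => by
      rw [← cdfFun_eq_cdf]
      exact (not_le.1 fun ht => hS.subset ht).le
    rw [hS, le_antisymm hz hz0, measure_empty, ENNReal.ofReal_zero]
  obtain ⟨t₀, ht₀⟩ := eventually_atTop.mp
    ((tendsto_cdf_atTop μ).eventually (eventually_gt_nhds hz1))
  have hbdd : BddAbove S := ⟨t₀, fun t ht => le_of_not_gt fun htt₀ => by
    have := ht₀ t htt₀.le
    rw [← cdfFun_eq_cdf] at this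
    exact (not_le.2 this) ht⟩
  set b := sSup S
  have hb : b ∈ S := (isClosed_Iic.preimage continuous_cdfFun).csSup_mem hS hbdd
  have hSb : S = Iic b := Subset.antisymm (fun t ht => le_csSup hbdd ht) fun t ht => by
    change cdfFun μ b ≤ z at hb
    change cdfFun μ t ≤ z
    rw [cdfFun_eq_cdf] at hb ⊢
    exact (monotone_cdf μ ht).trans hb
  have hFb : cdfFun μ b = z := by
    refine le_antisymm hb (le_of_not_gt fun hlt => ?_)
    obtain ⟨t, hbt, ht⟩ :=
      ((continuous_cdfFun.tendsto b).eventually (eventually_lt_nhds hlt)).exists_gt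
    exact (le_csSup hbdd (show t ∈ S from ht.le)).not_gt hbt
  rw [hSb, ← hFb, cdfFun_eq_cdf, ofReal_cdf]

theorem map_cdfFun : μ.map (cdfFun μ) = volume.restrict (Ioo 0 1) := by
  refine Measure.ext_of_Iic _ _ fun z => ?_
  rw [Measure.map_apply measurable_cdfFun measurableSet_Iic,
    Measure.restrict_apply' measurableSet_Ioo]
  rcases lt_or_ge z 0 with hz0 | hz0
  · have hF : cdfFun μ ⁻¹' Iic z = ∅ := eq_empty_of_forall_notMem fun t ht =>
      (hz0.trans_le ENNReal.toReal_nonneg).not_ge ht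
    have hU : Iic z ∩ Ioo (0 : ℝ) 1 = ∅ := eq_empty_of_forall_notMem fun u hu =>
      (hu.1.trans_lt hz0).not_gt hu.2.1
    simp [hF, hU]
  rcases lt_or_ge z 1 with hz1 | hz1
  · have hU : Iic z ∩ Ioo (0 : ℝ) 1 = Ioc 0 z := by
      ext u
      exact ⟨fun hu => ⟨hu.2.1, hu.1⟩, fun hu => ⟨hu.2, hu.1, hu.2.trans_lt hz1⟩⟩
    rw [measure_preimage_cdfFun_Iic hz0 hz1, hU, Real.volume_Ioc, sub_zero]
  · have hF : cdfFun μ ⁻¹' Iic z = univ := eq_univ_of_forall fun t => by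
      change cdfFun μ t ≤ z
      rw [cdfFun_eq_cdf]
      exact (cdf_le_one μ t).trans hz1
    rw [hF, inter_eq_right.2 fun u hu => hu.2.le.trans hz1, measure_univ, Real.volume_Ioo,
      sub_zero, ENNReal.ofReal_one]

lemma integrable_comp_cdfFun {f : ℝ → ℝ} (hf : Integrable f (volume.restrict (Ioo 0 1))) :
    Integrable (fun t => f (cdfFun μ t)) μ := by
  rw [← map_cdfFun (μ := μ)] at hf
  exact hf.comp_measurable measurable_cdfFun

lemma integral_comp_cdfFun {f : ℝ → ℝ}
    (hf : AEStronglyMeasurable f (volume.restrict (Ioo 0 1))) :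
    ∫ t, f (cdfFun μ t) ∂μ = ∫ u in Ioo 0 1, f u := by
  rw [← map_cdfFun (μ := μ)] at hf ⊢
  exact (integral_map measurable_cdfFun.aemeasurable hf).symm

lemma integrableOn_comp_cdfFun {s : Set ℝ} {c : ENNReal} (hc : c ≠ ⊤)
    (hle : volume.restrict s ≤ c • μ) {f : ℝ → ℝ}
    (hf : Integrable f (volume.restrict (Ioo 0 1))) : IntegrableOn (fun t => f (cdfFun μ t)) s :=
  ((integrable_comp_cdfFun hf).smul_measure hc).mono_measure hle

lemma setIntegral_abs_comp_cdfFun_le {s : Set ℝ} {ε : ℝ} (hε : 0 < ε)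
    (hle : volume.restrict s ≤ (ENNReal.ofReal ε)⁻¹ • μ) {f : ℝ → ℝ}
    (hf : Integrable f (volume.restrict (Ioo 0 1))) :
    ∫ t in s, |f (cdfFun μ t)| ≤ ε⁻¹ * ∫ u in Ioo 0 1, |f u| :=
  calc ∫ t in s, |f (cdfFun μ t)| ≤ ∫ t, |f (cdfFun μ t)| ∂((ENNReal.ofReal ε)⁻¹ • μ) :=
        integral_mono_measure hle (ae_of_all _ fun _ => abs_nonneg _)
          ((integrable_comp_cdfFun hf).abs.smul_measure
            (ENNReal.inv_ne_top.2 (ENNReal.ofReal_ne_zero_iff.2 hε)))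
    _ = ε⁻¹ * ∫ u in Ioo 0 1, |f u| := by
        rw [integral_smul_measure,
          integral_comp_cdfFun (f := fun u => |f u|) hf.abs.aestronglyMeasurable]
        simp [hε.le]

end ProbabilityIntegralTransform

lemma restrict_le_inv_smul_withDensity {α : Type*} [MeasurableSpace α] {m : Measure α}
    {f : α → ℝ} {s : Set α} {ε : ℝ} (hs : MeasurableSet s) (hε : 0 < ε)
    (hf : ∀ x ∈ s, ε ≤ f x) :
    m.restrict s ≤ (ENNReal.ofReal ε)⁻¹ • m.withDensity fun x => ENNReal.ofReal (f x) := by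
  have hε' : ENNReal.ofReal ε ≠ 0 := ENNReal.ofReal_ne_zero_iff.2 hε
  rw [← withDensity_indicator_one hs, ← withDensity_smul' _ _ (ENNReal.inv_ne_top.2 hε')]
  refine withDensity_mono (ae_of_all _ fun x => ?_)
  by_cases hx : x ∈ s
  · rw [indicator_of_mem hx, Pi.one_apply, Pi.smul_apply, smul_eq_mul, ← ENNReal.div_eq_inv_mul,
      ENNReal.le_div_iff_mul_le (Or.inl hε') (Or.inl ENNReal.ofReal_ne_top), one_mul]
    exact ENNReal.ofReal_le_ofReal (hf x hx)
  · rw [indicator_of_notMem hx]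
    exact zero_le

lemma integral_abs_le_sqrt_integral_sq {Ω : Type*} [MeasurableSpace Ω] {P : Measure Ω}
    [IsProbabilityMeasure P] {g : Ω → ℝ} (hg : MemLp g 2 P) :
    ∫ ω, |g ω| ∂P ≤ √(∫ ω, g ω ^ 2 ∂P) := by
  have hvar := variance_nonneg |g| P
  rw [variance_eq_sub hg.abs] at hvar
  refine Real.le_sqrt_of_sq_le ?_
  simpa [sq_abs] using hvar

lemma abs_intervalIntegral_le_integral_Icc_abs {f : ℝ → ℝ} {a b x : ℝ} (hx : x ∈ Icc a b)
    (hf : IntegrableOn f (Icc a b)) : |∫ t in a..x, f t| ≤ ∫ t in Icc a b, |f t| :=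
  calc |∫ t in a..x, f t| ≤ ∫ t in Ioc a x, |f t| := by
        rw [intervalIntegral.integral_of_le hx.1]; exact abs_integral_le_integral_abs
    _ ≤ ∫ t in Icc a b, |f t| := setIntegral_mono_set hf.abs (ae_of_all _ fun _ => abs_nonneg _)
        (Ioc_subset_Icc_self.trans (Icc_subset_Icc_right hx.2)).eventuallyLE

theorem stmt10_general (ε : ℝ) (hε : 0 < ε) (fμ : ℝ → ℝ)
    (μ : Measure ℝ) [IsProbabilityMeasure μ]
    (hμ : μ = volume.withDensity fun x => ENNReal.ofReal (fμ x))
    (hfε : ∀ x ∈ Set.Icc (0 : ℝ) 1, ε ≤ fμ x)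
    (ν₁ ν₂ : Measure ℝ) [IsProbabilityMeasure ν₁] [IsProbabilityMeasure ν₂]
    (h₁ : Integrable (fun x : ℝ => x ^ 2) ν₁) (h₂ : Integrable (fun x : ℝ => x ^ 2) ν₂)
    (Φ : Measure ℝ → ℝ → ℝ)
    (hΦ : ∀ ν x, Φ ν x = ∫ t in (0 : ℝ)..x, quantFun ν (cdfFun μ t)) :
    ∀ x ∈ Set.Icc (0 : ℝ) 1,
      |Φ ν₁ x - Φ ν₂ x| ≤
        (1 / ε) * Real.sqrt (∫ u in (0 : ℝ)..1, (quantFun ν₁ u - quantFun ν₂ u) ^ 2) := by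
  intro x hx
  have : NullSingletonClass μ :=
    ⟨fun y => hμ ▸ withDensity_absolutelyContinuous _ _ (Real.volume_singleton (a := y))⟩
  have : IsProbabilityMeasure (volume.restrict (Ioo (0 : ℝ) 1)) := ⟨by simp⟩
  have hle : volume.restrict (Icc (0 : ℝ) 1) ≤ (ENNReal.ofReal ε)⁻¹ • μ :=
    hμ ▸ restrict_le_inv_smul_withDensity measurableSet_Icc hε hfε
  have hne : (ENNReal.ofReal ε)⁻¹ ≠ ⊤ := ENNReal.inv_ne_top.2 (ENNReal.ofReal_ne_zero_iff.2 hε)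
  have hQ₁ := memLp_two_quantFun h₁
  have hQ₂ := memLp_two_quantFun h₂
  have hII {ν : Measure ℝ} (hQ : MemLp (quantFun ν) 2 (volume.restrict (Ioo 0 1))) :
      IntervalIntegrable (fun t => quantFun ν (cdfFun μ t)) volume 0 x :=
    (intervalIntegrable_iff_integrableOn_Icc_of_le hx.1).2
      ((integrableOn_comp_cdfFun hne hle (hQ.integrable one_le_two)).mono_set
        (Icc_subset_Icc_right hx.2))
  have hg := (hQ₁.sub hQ₂).integrable one_le_two
  rw [hΦ, hΦ, ← intervalIntegral.integral_sub (hII hQ₁) (hII hQ₂), one_div]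
  calc _ ≤ ∫ t in Icc 0 1, |quantFun ν₁ (cdfFun μ t) - quantFun ν₂ (cdfFun μ t)| :=
        abs_intervalIntegral_le_integral_Icc_abs hx (integrableOn_comp_cdfFun hne hle hg)
    _ ≤ ε⁻¹ * ∫ u in Ioo 0 1, |quantFun ν₁ u - quantFun ν₂ u| :=
        setIntegral_abs_comp_cdfFun_le hε hle hg
    _ ≤ ε⁻¹ * √(∫ u in Ioo 0 1, (quantFun ν₁ u - quantFun ν₂ u) ^ 2) := by
        gcongr; exact integral_abs_le_sqrt_integral_sq (hQ₁.sub hQ₂)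
    _ = _ := by
        rw [intervalIntegral.integral_of_le zero_le_one, setIntegral_congr_set Ioo_ae_eq_Ioc]

/-- With `Φ_ν(x) = ∫₀ˣ F_ν^{-1}(F_μ(ℓ)) dℓ`, for probability measures
`ν₁, ν₂` with finite second moments,
`sup_{x∈[0,1]} |Φ_{ν₁}(x) − Φ_{ν₂}(x)| ≤ (1/ε)·(∫₀¹ (F_{ν₁}^{-1}(u) − F_{ν₂}^{-1}(u))² du)^{1/2}`,
where `ε > 0` is a lower bound for the density of `μ` on `[0,1]`. -/
theorem stmt10 (ε : ℝ) (hε : 0 < ε) (fμ : ℝ → ℝ)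
    (μ : Measure ℝ) [IsProbabilityMeasure μ]
    (hμ : μ = volume.withDensity fun x => ENNReal.ofReal (fμ x))
    (hsupp : ∀ x : ℝ, x ∉ Set.Icc (0 : ℝ) 1 → fμ x = 0)
    (hfε : ∀ x ∈ Set.Icc (0 : ℝ) 1, ε ≤ fμ x)
    (ν₁ ν₂ : Measure ℝ) [IsProbabilityMeasure ν₁] [IsProbabilityMeasure ν₂]
    (h₁ : Integrable (fun x : ℝ => x ^ 2) ν₁) (h₂ : Integrable (fun x : ℝ => x ^ 2) ν₂)
    (Φ : Measure ℝ → ℝ → ℝ)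
    (hΦ : ∀ ν x, Φ ν x = ∫ t in (0 : ℝ)..x, quantFun ν (cdfFun μ t)) :
    ∀ x ∈ Set.Icc (0 : ℝ) 1,
      |Φ ν₁ x - Φ ν₂ x| ≤
        (1 / ε) * Real.sqrt (∫ u in (0 : ℝ)..1, (quantFun ν₁ u - quantFun ν₂ u) ^ 2) :=
  stmt10_general ε hε fμ μ hμ hfε ν₁ ν₂ h₁ h₂ Φ hΦ
end

section
/- Let μ be a Borel probability measure on ℝ whose cumulative distribution function F_μ is continuous and strictly increasing on ℝ. Let f₁, f₂ : ℝ → ℝ be nondecreasing, right-continuous functions such that the pushforward measures of μ under f₁ and under f₂ coincide. Then f₁ = f₂ (everywhere on ℝ). -/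
open MeasureTheory

lemma stmt13_aux (μ : Measure ℝ) [IsProbabilityMeasure μ]
    (hmono : StrictMono fun x : ℝ => (μ (Set.Iic x)).toReal)
    (f₁ f₂ : ℝ → ℝ) (h₁m : Monotone f₁) (h₂m : Monotone f₂)
    (h₂rc : ∀ x : ℝ, ContinuousWithinAt f₂ (Set.Ici x) x)
    (hpush : Measure.map f₁ μ = Measure.map f₂ μ) (x : ℝ) :
    f₁ x ≤ f₂ x := by
  by_contra h
  push_neg at h
  set t : ℝ := (f₂ x + f₁ x) / 2 with ht
  have ht₂ : f₂ x < t := by simp [ht]; linarith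
  have ht₁ : t < f₁ x := by simp [ht]; linarith
  -- find y > x with f₂ y < t
  have hev : ∀ᶠ y in nhdsWithin x (Set.Ici x), f₂ y < t :=
    (h₂rc x).eventually (Filter.Tendsto.eventually_lt_const ht₂ Filter.tendsto_id)
  have hev' : ∀ᶠ y in nhdsWithin x (Set.Ioi x), f₂ y < t :=
    hev.filter_mono (nhdsWithin_mono x Set.Ioi_subset_Ici_self)
  obtain ⟨y, hfy, hy⟩ := (hev'.and eventually_mem_nhdsWithin).exists
  -- set inclusions
  have hsub₁ : f₁ ⁻¹' Set.Iic t ⊆ Set.Iic x := by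
    intro z hz
    simp only [Set.mem_preimage, Set.mem_Iic] at hz ⊢
    by_contra hzx
    push_neg at hzx
    exact absurd (le_trans (h₁m hzx.le) hz) (not_le.mpr ht₁)
  have hsub₂ : Set.Iic y ⊆ f₂ ⁻¹' Set.Iic t := fun z hz =>
    le_trans (h₂m hz) hfy.le
  have hmap : μ (f₁ ⁻¹' Set.Iic t) = μ (f₂ ⁻¹' Set.Iic t) := by
    have e₁ : Measure.map f₁ μ (Set.Iic t) = μ (f₁ ⁻¹' Set.Iic t) :=
      Measure.map_apply h₁m.measurable measurableSet_Iic
    have e₂ : Measure.map f₂ μ (Set.Iic t) = μ (f₂ ⁻¹' Set.Iic t) :=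
      Measure.map_apply h₂m.measurable measurableSet_Iic
    rw [← e₁, ← e₂, hpush]
  have h1 : μ (f₁ ⁻¹' Set.Iic t) ≤ μ (Set.Iic x) := measure_mono hsub₁
  have h2 : μ (Set.Iic y) ≤ μ (f₂ ⁻¹' Set.Iic t) := measure_mono hsub₂
  have hxy : (μ (Set.Iic x)).toReal < (μ (Set.Iic y)).toReal := hmono hy
  have hle1 : (μ (f₁ ⁻¹' Set.Iic t)).toReal ≤ (μ (Set.Iic x)).toReal :=
    ENNReal.toReal_mono (measure_ne_top μ _) h1
  have hle2 : (μ (Set.Iic y)).toReal ≤ (μ (f₂ ⁻¹' Set.Iic t)).toReal :=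
    ENNReal.toReal_mono (measure_ne_top μ _) h2
  rw [hmap] at hle1
  linarith

/-- If the CDF of `μ` is continuous and strictly increasing, and
`f₁, f₂` are nondecreasing right-continuous functions with the same pushforward of `μ`,
then `f₁ = f₂`. -/
theorem stmt13 (μ : Measure ℝ) [IsProbabilityMeasure μ]
    (hcont : Continuous fun x : ℝ => (μ (Set.Iic x)).toReal)
    (hmono : StrictMono fun x : ℝ => (μ (Set.Iic x)).toReal)
    (f₁ f₂ : ℝ → ℝ) (h₁m : Monotone f₁) (h₂m : Monotone f₂)
    (h₁rc : ∀ x : ℝ, ContinuousWithinAt f₁ (Set.Ici x) x)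
    (h₂rc : ∀ x : ℝ, ContinuousWithinAt f₂ (Set.Ici x) x)
    (hpush : Measure.map f₁ μ = Measure.map f₂ μ) :
    f₁ = f₂ := by
  funext x
  exact le_antisymm (stmt13_aux μ hmono f₁ f₂ h₁m h₂m h₂rc hpush x)
    (stmt13_aux μ hmono f₂ f₁ h₂m h₁m h₁rc hpush.symm x)
end

section
/- There exists at most one solution of the differential system (D): if (ψ₁,c₁) and (ψ₂,c₂) are both solutions of (D), then ψ₁ = ψ₂ and c₁ = c₂. -/
/-!
Each solution has `ψ'' > 0` and `0 < ψ' < 1`, so `ψ'` is a bijection `ℝ → (0, 1)`. For two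
solutions with `c₂ ≤ c₁`, let `ρ = (ψ₂')⁻¹ ∘ ψ₁'` match points of equal slope and compare the
Legendre transforms `δ(s) = ψ₁*(p) - ψ₂*(p)` at `p = ψ₁'(s)`. Then `δ'(s) = (s - ρ s) ψ₁''(s)` has
the sign of `V(s) = ∫_{ρ s}^{s} N`, and where `δ < 0` the ODE together with the monotonicity of
`H'` forces `V' < 0`. Since `V` vanishes at `±∞`, `δ` cannot take a negative value; hence
`ψ₂* ≤ ψ₁*`, i.e. `ψ₁ ≤ ψ₂`, and the normalisation `∫ ψ N = 0` upgrades this to `ψ₁ = ψ₂`.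
-/

open MeasureTheory Filter Set Topology Function

theorem exists_mem_Icc_deriv_pos {u : ℝ → ℝ} (hu : Differentiable ℝ u) {a b α β : ℝ}
    (hab : a ≤ b) (ha : u a ≤ α) (hαβ : α < β) (hb : β ≤ u b) :
    ∃ x, u x ∈ Icc α β ∧ 0 < deriv u x := by
  by_contra! h
  have hlt : a < b := hab.lt_of_ne (by rintro rfl; linarith)
  -- `u` would stay below the line through `(a, α)` of slope `θ`, which ends below `β`.
  set θ := (β - α) / (2 * (b - a))
  have hθ : 0 < θ := div_pos (by linarith) (by linarith)
  have hθb : θ * (b - a) = (β - α) / 2 := by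
    simp only [θ]; field_simp [(sub_pos.2 hlt).ne']
  have hB : ∀ x, HasDerivAt (fun x => α + θ * (x - a)) θ x := fun x => by
    simpa using ((hasDerivAt_id x).sub_const a).const_mul θ |>.const_add α
  have hfence := image_le_of_deriv_right_lt_deriv_boundary hu.continuous.continuousOn
    (fun x _ => (hu x).hasDerivAt.hasDerivWithinAt) (by simpa using ha) hB
    (fun x hx hux => ?_) (right_mem_Icc.2 hab)
  · linarith
  · have hxb : θ * (x - a) ≤ θ * (b - a) := by gcongr; exact hx.2.le
    have := h x ⟨by nlinarith [hx.1], by linarith⟩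
    linarith

theorem add_mul_deriv_le_of_monotone_deriv {φ : ℝ → ℝ} (hφ : Differentiable ℝ φ)
    (hmono : Monotone (deriv φ)) (x y : ℝ) : φ x + (y - x) * deriv φ x ≤ φ y := by
  rcases lt_trichotomy x y with hxy | rfl | hxy
  · obtain ⟨ξ, hξ, hslope⟩ := exists_deriv_eq_slope φ hxy hφ.continuous.continuousOn
      hφ.differentiableOn
    have := hmono hξ.1.le
    rw [hslope, le_div_iff₀ (sub_pos.2 hxy)] at this
    linarith
  · simp
  · obtain ⟨ξ, hξ, hslope⟩ := exists_deriv_eq_slope φ hxy hφ.continuous.continuousOn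
      hφ.differentiableOn
    have := hmono hξ.2.le
    rw [hslope, div_le_iff₀ (sub_pos.2 hxy)] at this
    linarith

theorem StrictMono.hasDerivAt_invFun {f : ℝ → ℝ} (hf : StrictMono f) {f' x : ℝ}
    (hfd : HasDerivAt f f' x) (hf' : f' ≠ 0) (hx : range f ∈ 𝓝 (f x)) :
    HasDerivAt (invFun f) f'⁻¹ (f x) := by
  have hleft : LeftInverse (invFun f) f := leftInverse_invFun hf.injective
  have hmono : MonotoneOn (invFun f) (range f) := by
    rintro _ ⟨a, rfl⟩ _ ⟨b, rfl⟩ hab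
    rw [hleft a, hleft b]
    exact hf.le_iff_le.1 hab
  have himage : invFun f '' range f = univ :=
    eq_univ_of_forall fun a => ⟨f a, mem_range_self a, hleft a⟩
  refine HasDerivAt.of_local_left_inverse
    (continuousAt_of_monotoneOn_of_image_mem_nhds hmono hx (by rw [himage]; exact univ_mem))
    (by rwa [hleft x]) hf' ?_
  filter_upwards [hx] with y hy using invFun_eq hy

theorem exists_tendsto_intervalIntegral_atBot {N : ℝ → ℝ} (hN : Integrable N) :
    ∃ L, Tendsto (fun s => ∫ x in (0 : ℝ)..s, N x) atBot (𝓝 L) := by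
  refine ⟨_, ((intervalIntegral_tendsto_integral_Iic 0 hN.integrableOn tendsto_id).neg).congr
    fun s => ?_⟩
  rw [intervalIntegral.integral_symm, neg_neg, id]

theorem exists_tendsto_intervalIntegral_atTop {N : ℝ → ℝ} (hN : Integrable N) :
    ∃ L, Tendsto (fun s => ∫ x in (0 : ℝ)..s, N x) atTop (𝓝 L) :=
  ⟨_, intervalIntegral_tendsto_integral_Ioi 0 hN.integrableOn tendsto_id⟩

theorem eq_of_le_of_integral_mul_eq {N g₁ g₂ : ℝ → ℝ} (hN : ∀ s, 0 < N s) (hNc : Continuous N)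
    (hg₁ : Continuous g₁) (hg₂ : Continuous g₂) (hi₁ : Integrable fun z => g₁ z * N z)
    (hi₂ : Integrable fun z => g₂ z * N z) (heq : ∫ z, g₁ z * N z = ∫ z, g₂ z * N z)
    (hle : ∀ s, g₁ s ≤ g₂ s) : g₁ = g₂ := by
  have hnn : 0 ≤ fun z => (g₂ z - g₁ z) * N z := fun z =>
    mul_nonneg (sub_nonneg.2 (hle z)) (hN z).le
  have hi : Integrable fun z => (g₂ z - g₁ z) * N z := by
    simp_rw [sub_mul]; exact hi₂.sub hi₁
  have h0 : ∫ z, (g₂ z - g₁ z) * N z = 0 := by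
    simp_rw [sub_mul]; rw [integral_sub hi₂ hi₁, heq, sub_self]
  have hae := (integral_eq_zero_iff_of_nonneg hnn hi).1 h0
  have hzero : (fun z => (g₂ z - g₁ z) * N z) = 0 :=
    (Continuous.ae_eq_iff_eq volume (by fun_prop) continuous_zero).1 hae
  funext s
  have := congrFun hzero s
  simp only [Pi.zero_apply, mul_eq_zero, (hN s).ne', or_false, sub_eq_zero] at this
  exact this.symm

section Comparison

variable {δ δ' V V' : ℝ → ℝ} (hδ : ∀ t, HasDerivAt δ (δ' t) t) (hV : ∀ t, HasDerivAt V (V' t) t)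
  (hV' : ∀ t, δ t < 0 → V' t < 0)
include hδ hV hV'

/-- Going left from `s`, `V` can only grow while `δ < 0`, so `δ' ≥ 0` there and `δ` stays below
`δ s`. -/
theorem forall_le_neg_of_neg_of_nonneg (hδ' : ∀ t, 0 ≤ V t → 0 ≤ δ' t) {s : ℝ} (hδs : δ s < 0)
    (hVs : 0 ≤ V s) : ∀ t ≤ s, δ t < 0 := by
  by_contra! ⟨t₀, ht₀s, ht₀⟩
  have hδc : Continuous δ := continuous_iff_continuousAt.2 fun t => (hδ t).continuousAt
  let T := Icc t₀ s ∩ {t | 0 ≤ δ t}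
  obtain ⟨a, ⟨⟨ht₀a, has⟩, hδa : 0 ≤ δ a⟩, hmax⟩ : ∃ a, IsGreatest T a :=
    ⟨_, (isClosed_Icc.inter (isClosed_le continuous_const hδc)).isGreatest_csSup
      ⟨t₀, ⟨le_rfl, ht₀s⟩, ht₀⟩ ⟨s, fun t ht => ht.1.2⟩⟩
  replace has : a < s := has.lt_of_ne fun h => by rw [h] at hδa; linarith
  have hneg : ∀ t ∈ Ioc a s, δ t < 0 := fun t ht => by
    by_contra! h
    exact (hmax ⟨⟨ht₀a.trans ht.1.le, ht.2⟩, h⟩).not_gt ht.1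
  have hVanti : StrictAntiOn V (Icc a s) :=
    strictAntiOn_of_hasDerivWithinAt_neg (convex_Icc a s)
      (fun t _ => (hV t).continuousAt.continuousWithinAt) (fun t _ => (hV t).hasDerivWithinAt)
      fun t ht => by
        rw [interior_Icc] at ht
        exact hV' t (hneg t (Ioo_subset_Ioc_self ht))
  have hδmono : MonotoneOn δ (Icc a s) :=
    monotoneOn_of_hasDerivWithinAt_nonneg (convex_Icc a s) hδc.continuousOn
      (fun t _ => (hδ t).hasDerivWithinAt) fun t ht => by
        rw [interior_Icc] at ht
        exact hδ' t (hVs.trans (hVanti.antitoneOn (Ioo_subset_Icc_self ht)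
          (right_mem_Icc.2 has.le) ht.2.le))
  linarith [hδmono (left_mem_Icc.2 has.le) (right_mem_Icc.2 has.le) has.le]

theorem neg_of_neg_of_tendsto_atBot (hδ' : ∀ t, 0 ≤ V t → 0 ≤ δ' t)
    (hbot : Tendsto V atBot (𝓝 0)) {s : ℝ} (hδs : δ s < 0) : V s < 0 := by
  by_contra! hVs
  have hneg := forall_le_neg_of_neg_of_nonneg hδ hV hV' hδ' hδs hVs
  have hanti : StrictAntiOn V (Iic s) :=
    strictAntiOn_of_hasDerivWithinAt_neg (convex_Iic s)
      (fun t _ => (hV t).continuousAt.continuousWithinAt) (fun t _ => (hV t).hasDerivWithinAt)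
      fun t ht => hV' t (hneg t (interior_subset ht : t ∈ Iic s))
  have hlt : V s < V (s - 1) := hanti (by simp) (by simp) (by linarith)
  have hle : V (s - 1) ≤ 0 := ge_of_tendsto hbot <| by
    filter_upwards [eventually_le_atBot (s - 1)] with t ht
    exact hanti.antitoneOn (show t ≤ s by linarith) (show s - 1 ≤ s by linarith) ht
  linarith

/-- The mirror image `t ↦ (δ (-t), -V (-t))` of the previous lemma. -/
theorem pos_of_neg_of_tendsto_atTop (hδ' : ∀ t, V t ≤ 0 → δ' t ≤ 0)
    (htop : Tendsto V atTop (𝓝 0)) {s : ℝ} (hδs : δ s < 0) : 0 < V s := by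
  have := neg_of_neg_of_tendsto_atBot (δ := fun t => δ (-t)) (δ' := fun t => -δ' (-t))
    (V := fun t => -V (-t)) (V' := fun t => V' (-t))
    (fun t => by
      have := (hδ (-t)).comp t (hasDerivAt_neg t)
      simp only [mul_neg, mul_one] at this
      exact this)
    (fun t => by
      have := ((hV (-t)).comp t (hasDerivAt_neg t)).neg
      simp only [mul_neg, mul_one, neg_neg] at this
      exact this)
    (fun t ht => hV' (-t) ht) (fun t ht => neg_nonneg.2 (hδ' (-t) (by linarith)))
    (by simpa using (htop.comp tendsto_neg_atBot_atTop).neg) (s := -s) (by simpa using hδs)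
  simpa using this

theorem nonneg_of_tendsto_atBot_of_tendsto_atTop (hδ'pos : ∀ t, 0 ≤ V t → 0 ≤ δ' t)
    (hδ'neg : ∀ t, V t ≤ 0 → δ' t ≤ 0) (hbot : Tendsto V atBot (𝓝 0))
    (htop : Tendsto V atTop (𝓝 0)) (s : ℝ) : 0 ≤ δ s := by
  by_contra! hs
  exact (neg_of_neg_of_tendsto_atBot hδ hV hV' hδ'pos hbot hs).not_gt
    (pos_of_neg_of_tendsto_atTop hδ hV hV' hδ'neg htop hs)

end Comparison

/-- `legendre ψ s = ψ*(ψ' s)`, the Legendre transform of `ψ` at the slope `ψ' s`. -/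
noncomputable def legendre (ψ : ℝ → ℝ) (s : ℝ) : ℝ := s * deriv ψ s - ψ s

theorem hasDerivAt_legendre {ψ : ℝ → ℝ} (hψ : Differentiable ℝ ψ)
    (hψ' : Differentiable ℝ (deriv ψ)) (s : ℝ) :
    HasDerivAt (legendre ψ) (s * deriv (deriv ψ) s) s := by
  have := ((hasDerivAt_id s).mul (hψ' s).hasDerivAt).sub (hψ s).hasDerivAt
  simp only [id, one_mul, add_sub_cancel_left] at this
  exact this

/-- Conditions (1)–(3) of the system (D). -/
structure IsSolutionD (f H N ψ : ℝ → ℝ) (c : ℝ) : Prop where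
  contDiff : ContDiff ℝ 2 ψ
  ode : ∀ s, f (deriv ψ s) * deriv (deriv ψ) s * deriv H (legendre ψ s) = c * N s
  tendsto_atBot : Tendsto (deriv ψ) atBot (𝓝 0)
  tendsto_atTop : Tendsto (deriv ψ) atTop (𝓝 1)

namespace IsSolutionD

variable {f H N ψ : ℝ → ℝ} {c : ℝ}

theorem differentiable (h : IsSolutionD f H N ψ c) : Differentiable ℝ ψ :=
  h.contDiff.differentiable (by norm_num)

theorem differentiable_deriv (h : IsSolutionD f H N ψ c) : Differentiable ℝ (deriv ψ) :=
  h.contDiff.differentiable_deriv_two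

theorem Ioo_subset_range_deriv (h : IsSolutionD f H N ψ c) : Ioo 0 1 ⊆ range (deriv ψ) :=
  fun _ hp => mem_range_of_exists_le_of_exists_ge h.differentiable_deriv.continuous
    (h.tendsto_atBot.eventually (eventually_le_nhds hp.1)).exists
    (h.tendsto_atTop.eventually (eventually_ge_nhds hp.2)).exists

theorem exists_deriv_deriv_pos (h : IsSolutionD f H N ψ c) :
    ∃ s, deriv ψ s ∈ Icc (1 / 4) (3 / 4) ∧ 0 < deriv (deriv ψ) s := by
  obtain ⟨a, ha⟩ :=
    (h.tendsto_atBot.eventually (eventually_le_nhds (by norm_num : (0 : ℝ) < 1 / 4))).exists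
  obtain ⟨b, hb, hab⟩ := ((h.tendsto_atTop.eventually
    (eventually_ge_nhds (by norm_num : (3 / 4 : ℝ) < 1))).and (eventually_ge_atTop a)).exists
  exact exists_mem_Icc_deriv_pos h.differentiable_deriv hab ha (by norm_num) hb

section

variable (hf : ∀ x ∈ Icc (0 : ℝ) 1, 0 < f x) (hH : ∀ x, 0 < deriv H x) (hN : ∀ s, 0 < N s)
include hf hH hN

theorem const_pos (h : IsSolutionD f H N ψ c) : 0 < c := by
  obtain ⟨s, hs, hpos⟩ := h.exists_deriv_deriv_pos
  have hf' := hf (deriv ψ s) ⟨by linarith [hs.1], by linarith [hs.2]⟩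
  refine pos_of_mul_pos_left ?_ (hN s).le
  rw [← h.ode s]
  have := hH (legendre ψ s)
  positivity

theorem deriv_deriv_pos (h : IsSolutionD f H N ψ c) (s : ℝ) : 0 < deriv (deriv ψ) s := by
  have hne : ∀ x ∈ univ, deriv (deriv ψ) x ≠ 0 := fun x _ hx => by
    have := h.ode x
    rw [hx, mul_zero, zero_mul] at this
    exact (mul_pos (h.const_pos hf hH hN) (hN x)).ne this
  obtain ⟨x, -, hx⟩ := h.exists_deriv_deriv_pos
  refine ((hasDerivWithinAt_forall_lt_or_forall_gt_of_forall_ne convex_univ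
    (fun x _ => (h.differentiable_deriv x).hasDerivAt.hasDerivWithinAt) hne).resolve_left
    fun hneg => (hneg x trivial).not_gt hx) s trivial

theorem strictMono_deriv (h : IsSolutionD f H N ψ c) : StrictMono (deriv ψ) :=
  strictMono_of_deriv_pos (h.deriv_deriv_pos hf hH hN)

theorem deriv_mem_Ioo (h : IsSolutionD f H N ψ c) (s : ℝ) : deriv ψ s ∈ Ioo 0 1 := by
  have hmono := h.strictMono_deriv hf hH hN
  exact ⟨(hmono.monotone.le_of_tendsto h.tendsto_atBot (s - 1)).trans_lt (hmono (by linarith)),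
    (hmono (lt_add_one s)).trans_le (hmono.monotone.ge_of_tendsto h.tendsto_atTop (s + 1))⟩

theorem add_mul_deriv_le (h : IsSolutionD f H N ψ c) (σ s : ℝ) :
    ψ σ + (s - σ) * deriv ψ σ ≤ ψ s :=
  add_mul_deriv_le_of_monotone_deriv h.differentiable (h.strictMono_deriv hf hH hN).monotone σ s

end

end IsSolutionD

noncomputable def slopeMatch (ψ₁ ψ₂ : ℝ → ℝ) (s : ℝ) : ℝ := invFun (deriv ψ₂) (deriv ψ₁ s)

section TwoSolutions

variable {f H N ψ₁ ψ₂ : ℝ → ℝ} {c₁ c₂ : ℝ}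
  (hf : ∀ x ∈ Icc (0 : ℝ) 1, 0 < f x) (hH : ∀ x, 0 < deriv H x) (hN : ∀ s, 0 < N s)
  (h₁ : IsSolutionD f H N ψ₁ c₁) (h₂ : IsSolutionD f H N ψ₂ c₂)
include hf hH hN h₁ h₂

theorem deriv_slopeMatch (s : ℝ) : deriv ψ₂ (slopeMatch ψ₁ ψ₂ s) = deriv ψ₁ s :=
  invFun_eq (h₂.Ioo_subset_range_deriv (h₁.deriv_mem_Ioo hf hH hN s))

theorem hasDerivAt_slopeMatch (s : ℝ) :
    HasDerivAt (slopeMatch ψ₁ ψ₂)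
      (deriv (deriv ψ₁) s / deriv (deriv ψ₂) (slopeMatch ψ₁ ψ₂ s)) s := by
  have hr := deriv_slopeMatch hf hH hN h₁ h₂ s
  have hrange : range (deriv ψ₂) ∈ 𝓝 (deriv ψ₂ (slopeMatch ψ₁ ψ₂ s)) := by
    rw [hr]
    exact mem_of_superset (isOpen_Ioo.mem_nhds (h₁.deriv_mem_Ioo hf hH hN s))
      h₂.Ioo_subset_range_deriv
  have hinv := (h₂.strictMono_deriv hf hH hN).hasDerivAt_invFun
    (h₂.differentiable_deriv _).hasDerivAt (h₂.deriv_deriv_pos hf hH hN _).ne' hrange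
  rw [hr] at hinv
  rw [div_eq_inv_mul]
  exact hinv.comp s (h₁.differentiable_deriv s).hasDerivAt

theorem tendsto_slopeMatch_atBot : Tendsto (slopeMatch ψ₁ ψ₂) atBot atBot := by
  refine tendsto_atBot.2 fun b => ?_
  filter_upwards [h₁.tendsto_atBot.eventually
    (eventually_lt_nhds (h₂.deriv_mem_Ioo hf hH hN b).1)] with s hs
  rw [← deriv_slopeMatch hf hH hN h₁ h₂ s] at hs
  exact ((h₂.strictMono_deriv hf hH hN).lt_iff_lt.1 hs).le

theorem tendsto_slopeMatch_atTop : Tendsto (slopeMatch ψ₁ ψ₂) atTop atTop := by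
  refine tendsto_atTop.2 fun b => ?_
  filter_upwards [h₁.tendsto_atTop.eventually
    (eventually_gt_nhds (h₂.deriv_mem_Ioo hf hH hN b).2)] with s hs
  rw [← deriv_slopeMatch hf hH hN h₁ h₂ s] at hs
  exact ((h₂.strictMono_deriv hf hH hN).lt_iff_lt.1 hs).le

theorem hasDerivAt_legendre_sub_legendre_slopeMatch (s : ℝ) :
    HasDerivAt (fun t => legendre ψ₁ t - legendre ψ₂ (slopeMatch ψ₁ ψ₂ t))
      ((s - slopeMatch ψ₁ ψ₂ s) * deriv (deriv ψ₁) s) s := by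
  have hb := (h₂.deriv_deriv_pos hf hH hN (slopeMatch ψ₁ ψ₂ s)).ne'
  exact ((hasDerivAt_legendre h₁.differentiable h₁.differentiable_deriv s).sub
    ((hasDerivAt_legendre h₂.differentiable h₂.differentiable_deriv _).comp s
      (hasDerivAt_slopeMatch hf hH hN h₁ h₂ s))).congr_deriv (by field_simp)

theorem lt_mul_div_of_legendre_lt (hHmono : StrictMono (deriv H)) (hc : c₂ ≤ c₁) (s : ℝ)
    (hs : legendre ψ₁ s < legendre ψ₂ (slopeMatch ψ₁ ψ₂ s)) :
    N s < N (slopeMatch ψ₁ ψ₂ s) *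
      (deriv (deriv ψ₁) s / deriv (deriv ψ₂) (slopeMatch ψ₁ ψ₂ s)) := by
  set r := slopeMatch ψ₁ ψ₂ s
  have hr := deriv_slopeMatch hf hH hN h₁ h₂ s
  have hc₂ := h₂.const_pos hf hH hN
  have hb := (h₂.deriv_deriv_pos hf hH hN r).ne'
  set F := f (deriv ψ₁ s) * deriv (deriv ψ₁) s
  have hF : 0 < F := mul_pos (hf _ (Ioo_subset_Icc_self (h₁.deriv_mem_Ioo hf hH hN s)))
    (h₁.deriv_deriv_pos hf hH hN s)
  have e₁ : N s = F * deriv H (legendre ψ₁ s) / c₁ := by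
    rw [h₁.ode s]
    field_simp [(hc₂.trans_le hc).ne']
  have e₂ : N r * (deriv (deriv ψ₁) s / deriv (deriv ψ₂) r) =
      F * deriv H (legendre ψ₂ r) / c₂ := by
    have := h₂.ode r
    rw [hr] at this
    rw [eq_div_iff hc₂.ne']
    field_simp
    linear_combination -(deriv (deriv ψ₁) s) * this
  rw [e₁, e₂]
  calc F * deriv H (legendre ψ₁ s) / c₁ ≤ F * deriv H (legendre ψ₁ s) / c₂ :=
        div_le_div_of_nonneg_left (mul_pos hF (hH _)).le hc₂ hc
    _ < F * deriv H (legendre ψ₂ r) / c₂ := by gcongr; exact hHmono hs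

theorem legendre_slopeMatch_le (hHmono : StrictMono (deriv H)) (hNc : Continuous N)
    (hNi : Integrable N) (hc : c₂ ≤ c₁) (s : ℝ) :
    legendre ψ₂ (slopeMatch ψ₁ ψ₂ s) ≤ legendre ψ₁ s := by
  set ρ := slopeMatch ψ₁ ψ₂
  set Φ := fun s => ∫ x in (0 : ℝ)..s, N x
  have hΦ : ∀ s, HasDerivAt Φ (N s) s := fun s => (hNc.integral_hasStrictDerivAt 0 s).hasDerivAt
  have hΦmono : StrictMono Φ := strictMono_of_hasDerivAt_pos hΦ hN
  have hρ := hasDerivAt_slopeMatch hf hH hN h₁ h₂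
  have hu₁' := h₁.deriv_deriv_pos hf hH hN
  obtain ⟨_, hbot⟩ := exists_tendsto_intervalIntegral_atBot hNi
  obtain ⟨_, htop⟩ := exists_tendsto_intervalIntegral_atTop hNi
  refine sub_nonneg.1 (nonneg_of_tendsto_atBot_of_tendsto_atTop
    (hasDerivAt_legendre_sub_legendre_slopeMatch hf hH hN h₁ h₂)
    (V := fun t => Φ t - Φ (ρ t)) (fun t => (hΦ t).sub ((hΦ (ρ t)).comp t (hρ t)))
    (fun t ht => sub_neg.2 (lt_mul_div_of_legendre_lt hf hH hN h₁ h₂ hHmono hc t (sub_neg.1 ht)))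
    (fun t ht => mul_nonneg (sub_nonneg.2 (hΦmono.le_iff_le.1 (sub_nonneg.1 ht))) (hu₁' t).le)
    (fun t ht => mul_nonpos_of_nonpos_of_nonneg
      (sub_nonpos.2 (hΦmono.le_iff_le.1 (sub_nonpos.1 ht))) (hu₁' t).le)
    (by simpa using hbot.sub (hbot.comp (tendsto_slopeMatch_atBot hf hH hN h₁ h₂)))
    (by simpa using htop.sub (htop.comp (tendsto_slopeMatch_atTop hf hH hN h₁ h₂))) s)

theorem le_of_const_le (hHmono : StrictMono (deriv H)) (hNc : Continuous N)
    (hNi : Integrable N) (hc : c₂ ≤ c₁) (s : ℝ) : ψ₁ s ≤ ψ₂ s := by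
  set r := slopeMatch ψ₁ ψ₂ s
  calc ψ₁ s = s * deriv ψ₁ s - legendre ψ₁ s := by rw [legendre]; ring
    _ ≤ s * deriv ψ₁ s - legendre ψ₂ r := by
      linarith [legendre_slopeMatch_le hf hH hN h₁ h₂ hHmono hNc hNi hc s]
    _ = ψ₂ r + (s - r) * deriv ψ₂ r := by
      rw [legendre, deriv_slopeMatch hf hH hN h₁ h₂ s]; ring
    _ ≤ ψ₂ s := h₂.add_mul_deriv_le hf hH hN r s

end TwoSolutions

theorem stmt14_general (fμ H : ℝ → ℝ) (ε : ℝ)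
    (hε : 0 < ε)
    (hfpos : ∀ x ∈ Set.Icc (0 : ℝ) 1, 0 < fμ x)
    (hHconv : StrictConvexOn ℝ Set.univ H)
    (hH'lb : ∀ x : ℝ, ε < deriv H x)
    (N : ℝ → ℝ) (hN : ∀ s, N s = Real.exp (-(s ^ 2) / 2) / Real.sqrt (2 * Real.pi))
    (ψ₁ ψ₂ : ℝ → ℝ) (c₁ c₂ : ℝ)
    (hψ₁C2 : ContDiff ℝ 2 ψ₁)
    (heq₁ : ∀ s : ℝ,
      fμ (deriv ψ₁ s) * deriv (deriv ψ₁) s * deriv H (s * deriv ψ₁ s - ψ₁ s) = c₁ * N s)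
    (hbot₁ : Tendsto (deriv ψ₁) atBot (nhds 0))
    (htop₁ : Tendsto (deriv ψ₁) atTop (nhds 1))
    (hint₁ : Integrable (fun z => ψ₁ z * N z))
    (hzero₁ : (∫ z, ψ₁ z * N z) = 0)
    (hψ₂C2 : ContDiff ℝ 2 ψ₂)
    (heq₂ : ∀ s : ℝ,
      fμ (deriv ψ₂ s) * deriv (deriv ψ₂) s * deriv H (s * deriv ψ₂ s - ψ₂ s) = c₂ * N s)
    (hbot₂ : Tendsto (deriv ψ₂) atBot (nhds 0))
    (htop₂ : Tendsto (deriv ψ₂) atTop (nhds 1))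
    (hint₂ : Integrable (fun z => ψ₂ z * N z))
    (hzero₂ : (∫ z, ψ₂ z * N z) = 0) :
    ψ₁ = ψ₂ ∧ c₁ = c₂ := by
  have hH : ∀ x, 0 < deriv H x := fun x => hε.trans (hH'lb x)
  have hHmono : StrictMono (deriv H) := fun x y hxy => hHconv.strictMonoOn_deriv
    (fun x _ => differentiableAt_of_deriv_ne_zero (hH x).ne') trivial trivial hxy
  have hNgauss : N = ProbabilityTheory.gaussianPDFReal 0 1 := by
    ext s
    simp [hN, ProbabilityTheory.gaussianPDFReal, div_eq_inv_mul]
  have hNpos : ∀ s, 0 < N s := hNgauss ▸ fun s =>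
    ProbabilityTheory.gaussianPDFReal_pos 0 1 s one_ne_zero
  have hNc : Continuous N := by rw [funext hN]; fun_prop
  have hNi : Integrable N := hNgauss ▸ ProbabilityTheory.integrable_gaussianPDFReal 0 1
  have h₁ : IsSolutionD fμ H N ψ₁ c₁ := ⟨hψ₁C2, heq₁, hbot₁, htop₁⟩
  have h₂ : IsSolutionD fμ H N ψ₂ c₂ := ⟨hψ₂C2, heq₂, hbot₂, htop₂⟩
  have hψ : ψ₁ = ψ₂ := by
    rcases le_total c₂ c₁ with hc | hc
    · exact eq_of_le_of_integral_mul_eq hNpos hNc hψ₁C2.continuous hψ₂C2.continuous hint₁ hint₂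
        (hzero₁.trans hzero₂.symm) (le_of_const_le hfpos hH hNpos h₁ h₂ hHmono hNc hNi hc)
    · exact (eq_of_le_of_integral_mul_eq hNpos hNc hψ₂C2.continuous hψ₁C2.continuous hint₂
        hint₁ (hzero₂.trans hzero₁.symm)
        (le_of_const_le hfpos hH hNpos h₂ h₁ hHmono hNc hNi hc)).symm
  refine ⟨hψ, mul_right_cancel₀ (hNpos 0).ne' ?_⟩
  rw [← heq₁ 0, ← heq₂ 0, hψ]

/-- Uniqueness of solutions of the differential system (D): if
`(ψ₁,c₁)` and `(ψ₂,c₂)` both solve (D), then `ψ₁ = ψ₂` and `c₁ = c₂`. -/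
theorem stmt14 (fμ H : ℝ → ℝ) (ε K : ℝ)
    (hε : 0 < ε) (hεK : ε < K)
    (hfC1 : ContDiffOn ℝ 1 fμ (Set.Icc 0 1))
    (hfpos : ∀ x ∈ Set.Icc (0 : ℝ) 1, 0 < fμ x)
    (hH : ContDiff ℝ 2 H)
    (hHconv : StrictConvexOn ℝ Set.univ H)
    (hH'lb : ∀ x : ℝ, ε < deriv H x) (hH'ub : ∀ x : ℝ, deriv H x < K)
    (N : ℝ → ℝ) (hN : ∀ s, N s = Real.exp (-(s ^ 2) / 2) / Real.sqrt (2 * Real.pi))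
    (ψ₁ ψ₂ : ℝ → ℝ) (c₁ c₂ : ℝ)
    (hψ₁C2 : ContDiff ℝ 2 ψ₁)
    (heq₁ : ∀ s : ℝ,
      fμ (deriv ψ₁ s) * deriv (deriv ψ₁) s * deriv H (s * deriv ψ₁ s - ψ₁ s) = c₁ * N s)
    (hbot₁ : Tendsto (deriv ψ₁) atBot (nhds 0))
    (htop₁ : Tendsto (deriv ψ₁) atTop (nhds 1))
    (hint₁ : Integrable (fun z => ψ₁ z * N z))
    (hzero₁ : (∫ z, ψ₁ z * N z) = 0)
    (hψ₂C2 : ContDiff ℝ 2 ψ₂)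
    (heq₂ : ∀ s : ℝ,
      fμ (deriv ψ₂ s) * deriv (deriv ψ₂) s * deriv H (s * deriv ψ₂ s - ψ₂ s) = c₂ * N s)
    (hbot₂ : Tendsto (deriv ψ₂) atBot (nhds 0))
    (htop₂ : Tendsto (deriv ψ₂) atTop (nhds 1))
    (hint₂ : Integrable (fun z => ψ₂ z * N z))
    (hzero₂ : (∫ z, ψ₂ z * N z) = 0) :
    ψ₁ = ψ₂ ∧ c₁ = c₂ :=
  stmt14_general fμ H ε hε hfpos hHconv hH'lb N hN ψ₁ ψ₂ c₁ c₂ hψ₁C2 heq₁ hbot₁ htop₁ hint₁ hzero₁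
    hψ₂C2 heq₂ hbot₂ htop₂ hint₂ hzero₂
end
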